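/- arXiv:2504.18909 — 5 statements merged into one kernel-verified Lean document; each statement's English description precedes it below -/
import Mathlib

section
/- Let R be a commutative local ring with maximal ideal 𝔪 whose residue field R/𝔪 is isomorphic to 𝔽₂. In the group ring ℤ[G(R)], let N be the additive subgroup generated by all elements ([a₁]+[a₂]+[a₃]+[a₄]) − ([b₁]+[b₂]+[b₃]+[b₄]) for units a₁,…,a₄,b₁,…,b₄ of R admitting an invertible 4×4 matrix P over R with P·diag(a₁,a₂,a₃,a₄)·Pᵀ = diag(b₁,b₂,b₃,b₄). Then N equals the additive subgroup generated by the following two families of elements: (1) [a]+[b] − [a+n²b] − [b+m²a], for units a, b of R and non-invertible elements m, n ∈ 𝔪 with m·a + n·b = 0; and (2) [a]+[b]+[c]+[d] − [u]−[v]−[w]−[a·b·c·d·u·v·w], for units a, b, c, d of R, where u := a + c⁻¹ + d⁻¹, v := a⁻¹ + b⁻¹ + d and w := a + b + a²·c. (Equivalently, the kernel of the surjection ℤ[G(R)] → GW(R) is additively generated by the relations (1) and (2).) -/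
noncomputable section

/-- The subgroup of squares of units of a commutative ring. -/
def squareUnits (R : Type) [CommRing R] : Subgroup Rˣ :=
  (powMonoidHom 2 : Rˣ →* Rˣ).range

/-- The group of square classes `Rˣ/(Rˣ)²`. -/
def SqCl (R : Type) [CommRing R] : Type := Rˣ ⧸ squareUnits R

instance (R : Type) [CommRing R] : CommGroup (SqCl R) :=
  QuotientGroup.Quotient.commGroup (squareUnits R)

/-- The square class `[a]` of a unit `a`. -/
def cls {R : Type} [CommRing R] (a : Rˣ) : SqCl R := QuotientGroup.mk a

/-- The group ring `ℤ[Rˣ/(Rˣ)²]`. -/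
abbrev GRing (R : Type) [CommRing R] := MonoidAlgebra ℤ (SqCl R)

/-- The generator `[a]` of the group ring, for a unit `a`. -/
def gen {R : Type} [CommRing R] (a : Rˣ) : GRing R :=
  MonoidAlgebra.of ℤ (SqCl R) (cls a)

/-- The set of relations defining the Grothendieck–Witt ring of a (connected semi-)local ring:
`([a₁]+[a₂]+[a₃]+[a₄]) − ([b₁]+[b₂]+[b₃]+[b₄])` whenever there exists `P ∈ GL₄(R)` with
`P ⬝ diag(a₁,…,a₄) ⬝ Pᵀ = diag(b₁,…,b₄)`. -/
def gwRel (R : Type) [CommRing R] : Set (GRing R) :=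
  {x | ∃ (a b : Fin 4 → Rˣ) (P : Matrix (Fin 4) (Fin 4) R),
    IsUnit P.det ∧
    P * Matrix.diagonal (fun i => (a i : R)) * P.transpose =
      Matrix.diagonal (fun i => (b i : R)) ∧
    x = (∑ i, gen (a i)) - (∑ i, gen (b i))}

/-- The (symmetric) Grothendieck–Witt ring of `R`, presented à la Knebusch–Rosenberg–Ware. -/
abbrev GW (R : Type) [CommRing R] := GRing R ⧸ Ideal.span (gwRel R)

/-- The class `[a] ∈ GW(R)` of a unit `a`. -/
def gw {R : Type} [CommRing R] (a : Rˣ) : GW R :=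
  Ideal.Quotient.mk (Ideal.span (gwRel R)) (gen a)

/-- The (symmetric) Witt ring of `R` : the quotient of `GW(R)` by the ideal generated by the
hyperbolic element `[1] + [-1]`. -/
abbrev Wr (R : Type) [CommRing R] := GW R ⧸ Ideal.span {gw (R := R) 1 + gw (-1)}

/-- The class in the Witt ring of a unit `a`. -/
def wcl {R : Type} [CommRing R] (a : Rˣ) : Wr R :=
  Ideal.Quotient.mk (Ideal.span {gw (R := R) 1 + gw (-1)}) (gw a)


/-!
Reducing a congruence `P ⬝ diag(a) ⬝ Pᵀ = diag(b)` modulo `𝔪` gives a matrix `P̄` over `𝔽₂` with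
`P̄ P̄ᵀ = 1`, because every unit reduces to `1`. In size four such matrices are the permutation
matrices `Pσ` and their complements `Pσ + J` (`J` the all-ones matrix). If `P̄ = Pσ`, then after
permuting the columns `P ≡ 1 (mod 𝔪)`, and Gaussian elimination diagonalises `P` by moves
`[[1, β], [r, 1]]` with `β, r ∈ 𝔪`, which realise exactly the relations (1). If `P̄ = Pσ + J`, one
first splits off an explicit congruence that realises relation (2) and reduces to `Pρ + J`; since
`(Pσ + J)(Pρ + J)ᵀ = Pσ Pρᵀ` over `𝔽₂` in even size, what is left reduces to a permutation matrix.
Conversely both families come from explicit congruences, the square class of the fourth entry in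
(2) being read off from the determinant.
-/

open IsLocalRing Matrix

section Congruence

variable {R : Type*} [CommRing R] {n : Type*} [Fintype n] [DecidableEq n]

def CongrDiag (P : Matrix n n R) (d b : n → Rˣ) : Prop :=
  P * diagonal (fun k => (d k : R)) * Pᵀ = diagonal (fun k => (b k : R))

lemma mul_diagonal_mul_transpose_apply (P : Matrix n n R) (d : n → R) (x y : n) :
    (P * diagonal d * Pᵀ) x y = ∑ k, P x k * d k * P y k := by
  simp only [mul_apply (M := P * diagonal d), mul_diagonal, transpose_apply]

lemma congrDiag_mul_iff {B Q : Matrix n n R} {d e b : n → Rˣ} (hB : CongrDiag B d e) :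
    CongrDiag (Q * B) d b ↔ CongrDiag Q e b := by
  rw [CongrDiag, CongrDiag, ← hB, transpose_mul]
  simp only [Matrix.mul_assoc]

lemma CongrDiag.submatrix {P : Matrix n n R} {d b : n → Rˣ} (hP : CongrDiag P d b)
    (σ : Equiv.Perm n) : CongrDiag (P.submatrix id σ) (d ∘ σ) b := by
  have hd : diagonal (fun k => ((d ∘ σ) k : R)) = (diagonal fun k => (d k : R)).submatrix σ σ :=
    (submatrix_diagonal_equiv (fun k => (d k : R)) σ).symm
  rw [CongrDiag, hd, transpose_submatrix, submatrix_mul_equiv, submatrix_mul_equiv, hP,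
    submatrix_id_id]

lemma CongrDiag.col_eq_zero {P : Matrix n n R} {d b : n → Rˣ} (hP : CongrDiag P d b) {i : n}
    (hii : IsUnit (P i i)) (hrow : ∀ k, k ≠ i → P i k = 0) (l : n) (hl : l ≠ i) :
    P l i = 0 := by
  have h := congrFun (congrFun hP i) l
  rw [mul_diagonal_mul_transpose_apply, diagonal_apply_ne _ hl.symm,
    Fintype.sum_eq_single i fun k hk => by rw [hrow k hk, zero_mul, zero_mul]] at h
  exact (hii.mul (d i).isUnit).mul_right_eq_zero.mp h

def binaryMove (i j : n) (β r : R) : Matrix n n R := 1 + single i j β + single j i r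

omit [Fintype n] in
lemma transpose_binaryMove (i j : n) (β r : R) :
    (binaryMove i j β r)ᵀ = binaryMove i j r β := by
  simp only [binaryMove, transpose_add, transpose_one, transpose_single, add_assoc,
    add_comm (single j i β)]

omit [Fintype n] in
lemma map_binaryMove {K : Type*} [CommRing K] (g : R →+* K) (i j : n) (β r : R) :
    (binaryMove i j β r).map g = binaryMove i j (g β) (g r) := by
  simp [binaryMove, Matrix.map_add, map_single]

lemma mul_binaryMove_apply (Q : Matrix n n R) (i j : n) (β r : R) (l k : n) :
    (Q * binaryMove i j β r) l k =
      Q l k + (if k = j then Q l i * β else 0) + (if k = i then Q l j * r else 0) := by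
  have hsingle : ∀ (i j : n) (c : R), (Q * single i j c) l k = if k = j then Q l i * c else 0 := by
    intro i j c
    split_ifs with h
    · rw [h, mul_single_apply_same]
    · exact mul_single_apply_of_ne _ _ _ _ _ h _
  simp only [binaryMove, Matrix.mul_add, Matrix.mul_one, Matrix.add_apply, hsingle]

lemma binaryMove_mul_diagonal_mul_transpose {i j : n} (hij : i ≠ j) {β r : R} {d e : n → R}
    (hcross : r * d i + β * d j = 0) (hi : e i = d i + β ^ 2 * d j)
    (hj : e j = d j + r ^ 2 * d i) (ho : ∀ k, k ≠ i → k ≠ j → e k = d k) :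
    binaryMove i j β r * diagonal d * (binaryMove i j β r)ᵀ = diagonal e := by
  ext x y
  rw [transpose_binaryMove, mul_binaryMove_apply]
  simp only [mul_diagonal, binaryMove, Matrix.add_apply, one_apply, single_apply, diagonal_apply]
  have hji := hij.symm
  by_cases hxi : x = i
  · subst x
    by_cases hyi : y = i
    · subst y
      simp only [↓reduceIte, hij, hji, and_self, and_true, and_false, add_zero, zero_add, one_mul,
        hi]
      ring
    by_cases hyj : y = j
    · subst y
      simp only [↓reduceIte, hij, hji, and_self, and_true, and_false, add_zero, zero_add, one_mul]
      linear_combination hcross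
    · simp [hyi, hyj, Ne.symm hyi, Ne.symm hyj]
  by_cases hxj : x = j
  · subst x
    by_cases hyi : y = i
    · subst y
      simp only [↓reduceIte, hij, hji, and_self, and_true, and_false, add_zero, zero_add, one_mul]
      linear_combination hcross
    by_cases hyj : y = j
    · subst y
      simp only [↓reduceIte, hij, hji, and_self, and_true, and_false, add_zero, zero_add, one_mul,
        hj]
      ring
    · simp [hyi, hyj, Ne.symm hyi, Ne.symm hyj]
  · by_cases hxy : x = y
    · subst y; simp [hxi, hxj, Ne.symm hxi, Ne.symm hxj, ho]
    · simp [hxi, hxj, Ne.symm hxi, Ne.symm hxj, hxy]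

lemma congrDiag_binaryMove {i j : n} (hij : i ≠ j) {β r : R} {d e : n → Rˣ}
    (hcross : r * d i + β * d j = 0) (hi : (e i : R) = d i + β ^ 2 * d j)
    (hj : (e j : R) = d j + r ^ 2 * d i) (ho : ∀ k, k ≠ i → k ≠ j → e k = d k) :
    CongrDiag (binaryMove i j β r) d e :=
  binaryMove_mul_diagonal_mul_transpose hij hcross hi hj fun k hki hkj => by rw [ho k hki hkj]

end Congruence

section SquareClass

variable {R : Type} [CommRing R] {n : Type*} [Fintype n]

lemma gen_mul_sq (a s : Rˣ) : gen (a * s ^ 2) = gen a :=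
  congrArg (MonoidAlgebra.of ℤ (SqCl R)) (QuotientGroup.mk_mul_of_mem a ⟨s, rfl⟩)

lemma gen_eq_of_mul_eq_sq {a b s : Rˣ} (h : a * b = s ^ 2) : gen a = gen b := by
  have hb : b = a * (a⁻¹ * s) ^ 2 := by rw [mul_pow, ← h]; group
  rw [hb, gen_mul_sq]

def diagClass (d : n → Rˣ) : GRing R := ∑ k, gen (d k)

lemma diagClass_sub_eq_of_eq_of_ne {d e : n → Rˣ} {i j : n} (hij : i ≠ j)
    (ho : ∀ k, k ≠ i → k ≠ j → e k = d k) :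
    diagClass d - diagClass e = (gen (d i) + gen (d j)) - (gen (e i) + gen (e j)) := by
  rw [diagClass, diagClass, ← Finset.sum_sub_distrib,
    Fintype.sum_eq_add i j hij fun k hk => by rw [ho k hk.1 hk.2, sub_self]]
  abel

lemma CongrDiag.diagClass_eq [DecidableEq n] {P : Matrix n n R} {d b : n → Rˣ}
    (hP : CongrDiag P d b) (hdiag : ∀ l, IsUnit (P l l)) (hoff : ∀ l k, k ≠ l → P l k = 0) :
    diagClass d = diagClass b := by
  refine Finset.sum_congr rfl fun l _ => ?_
  obtain ⟨u, hu⟩ := hdiag l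
  have h := congrFun (congrFun hP l) l
  rw [mul_diagonal_mul_transpose_apply, diagonal_apply_eq,
    Fintype.sum_eq_single l fun k hk => by rw [hoff l k hk, zero_mul, zero_mul]] at h
  rw [← gen_mul_sq (d l) u]
  congr 1
  ext
  push_cast
  rw [← h, hu]
  ring

end SquareClass

section LocalRing

variable {R : Type*} [CommRing R] [IsLocalRing R]

lemma isUnit_add_of_mem_maximalIdeal {x y : R} (hx : IsUnit x) (hy : y ∈ maximalIdeal R) :
    IsUnit (x + y) := by
  by_contra h
  have hx' := sub_mem ((mem_maximalIdeal _).mpr h) hy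
  rw [add_sub_cancel_right] at hx'
  exact hx' hx

lemma eq_zero_of_eq_mul_of_mem_maximalIdeal {x m : R} (hm : m ∈ maximalIdeal R)
    (h : x = m * x) : x = 0 :=
  (isUnit_one_sub_self_of_mem_nonunits m hm).mul_right_eq_zero.mp (by linear_combination h)

variable {n : Type*} [Fintype n] [DecidableEq n]

lemma apply_eq_zero_of_mul_binaryMove {Q : Matrix n n R} {i j : n} (hij : i ≠ j) {β r : R}
    (hβr : β * r ∈ maximalIdeal R) {l : n}
    (h : (Q * binaryMove i j β r) l j = β * (Q * binaryMove i j β r) l i) : Q l j = 0 := by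
  simp only [mul_binaryMove_apply, if_neg hij, if_neg hij.symm, ↓reduceIte, add_zero] at h
  exact eq_zero_of_eq_mul_of_mem_maximalIdeal hβr (by linear_combination h)

variable {K : Type*} [CommRing K] {g : R →+* K}

lemma isUnit_iff_map_ne_zero (hg : RingHom.ker g = maximalIdeal R) (x : R) :
    IsUnit x ↔ g x ≠ 0 := by
  rw [Ne, ← RingHom.mem_ker, hg, mem_maximalIdeal, mem_nonunits_iff, not_not]

omit [Fintype n] in
lemma apply_mem_maximalIdeal_of_map_eq_one (hg : RingHom.ker g = maximalIdeal R)
    {P : Matrix n n R} (h : P.map g = 1) {i j : n} (hij : i ≠ j) : P i j ∈ maximalIdeal R :=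
  hg ▸ RingHom.mem_ker.mpr (by simpa [hij] using congrFun (congrFun h i) j)

omit [Fintype n] in
lemma map_binaryMove_eq_one (hg : RingHom.ker g = maximalIdeal R) (i j : n) {β r : R}
    (hβ : β ∈ maximalIdeal R) (hr : r ∈ maximalIdeal R) : (binaryMove i j β r).map g = 1 := by
  rw [← hg] at hβ hr
  rw [map_binaryMove, RingHom.mem_ker.mp hβ, RingHom.mem_ker.mp hr]
  simp [binaryMove]

variable [Nontrivial K]

lemma isUnit_det_of_map_eq_one (hg : RingHom.ker g = maximalIdeal R) {P : Matrix n n R}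
    (h : P.map g = 1) : IsUnit P.det := by
  rw [isUnit_iff_map_ne_zero hg, RingHom.map_det, RingHom.mapMatrix_apply, h, det_one]
  exact one_ne_zero

omit [Fintype n] in
lemma isUnit_apply_self_of_map_eq_one (hg : RingHom.ker g = maximalIdeal R)
    {P : Matrix n n R} (h : P.map g = 1) (i : n) : IsUnit (P i i) := by
  rw [isUnit_iff_map_ne_zero hg, show g (P i i) = 1 by simpa using congrFun (congrFun h i) i]
  exact one_ne_zero

end LocalRing

section Elimination

variable {R : Type} [CommRing R] [IsLocalRing R] {n : Type*} [Fintype n] [DecidableEq n]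

/-- Family (1) of relations. -/
def binaryRel (R : Type) [CommRing R] [IsLocalRing R] : Set (GRing R) :=
  {x : GRing R | ∃ (a b a' b' : Rˣ) (m n : R),
      m ∈ maximalIdeal R ∧ n ∈ maximalIdeal R ∧
      m * (a : R) + n * (b : R) = 0 ∧
      (a' : R) = (a : R) + n ^ 2 * (b : R) ∧
      (b' : R) = (b : R) + m ^ 2 * (a : R) ∧
      x = (gen a + gen b) - (gen a' + gen b')}

lemma exists_congrDiag_binaryMove {i j : n} (hij : i ≠ j) (d : n → Rˣ) {β r : R}
    (hβ : β ∈ maximalIdeal R) (hr : r ∈ maximalIdeal R) (hcross : r * d i + β * d j = 0) :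
    ∃ e : n → Rˣ, CongrDiag (binaryMove i j β r) d e ∧ diagClass d - diagClass e ∈ binaryRel R := by
  obtain ⟨ei, hei⟩ := isUnit_add_of_mem_maximalIdeal (d i).isUnit
    (Ideal.mul_mem_right (d j : R) _ (Ideal.pow_mem_of_mem _ hβ 2 two_pos))
  obtain ⟨ej, hej⟩ := isUnit_add_of_mem_maximalIdeal (d j).isUnit
    (Ideal.mul_mem_right (d i : R) _ (Ideal.pow_mem_of_mem _ hr 2 two_pos))
  set e := Function.update (Function.update d i ei) j ej
  have ho : ∀ k, k ≠ i → k ≠ j → e k = d k := fun k hki hkj => by simp [e, hki, hkj]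
  have hei' : (e i : R) = d i + β ^ 2 * d j := by simp [e, hij, hei]
  have hej' : (e j : R) = d j + r ^ 2 * d i := by simp [e, hej]
  exact ⟨e, congrDiag_binaryMove hij hcross hei' hej' ho,
    d i, d j, e i, e j, r, β, hr, hβ, hcross, hei', hej', diagClass_sub_eq_of_eq_of_ne hij ho⟩

variable {K : Type*} [CommRing K] [Nontrivial K] {g : R →+* K}

/-- Multiplying `P` on the right by the inverse of the binary move with `β = P i j / P i i`
clears the entry `(i, j)`; this column operation only mixes the columns `i` and `j`. -/
lemma exists_congrDiag_apply_eq_zero (hg : RingHom.ker g = maximalIdeal R)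
    {P : Matrix n n R} {d b : n → Rˣ} (h1 : P.map g = 1) (hP : CongrDiag P d b)
    {i j : n} (hij : i ≠ j) :
    ∃ (Q : Matrix n n R) (e : n → Rˣ), Q.map g = 1 ∧ CongrDiag Q e b ∧ Q i j = 0 ∧
      (∀ l k, k ≠ i → k ≠ j → Q l k = P l k) ∧
      (∀ l, P l i = 0 → P l j = 0 → Q l i = 0 ∧ Q l j = 0) ∧
      diagClass d - diagClass e ∈ binaryRel R := by
  obtain ⟨u, hu⟩ := isUnit_apply_self_of_map_eq_one hg h1 i
  set β := P i j * ↑u⁻¹ with hβdef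
  have hβ : β ∈ maximalIdeal R :=
    Ideal.mul_mem_right _ _ (apply_mem_maximalIdeal_of_map_eq_one hg h1 hij)
  have hβP : P i j = β * P i i := by rw [← hu, hβdef, mul_assoc, Units.inv_mul, mul_one]
  set r := -(β * d j * ↑(d i)⁻¹)
  have hr : r ∈ maximalIdeal R := neg_mem (Ideal.mul_mem_right _ _ (Ideal.mul_mem_right _ _ hβ))
  have hcross : r * d i + β * d j = 0 := by
    linear_combination (-(β * d j)) * Units.inv_mul (d i)
  clear_value β r
  obtain ⟨e, hB, hde⟩ := exists_congrDiag_binaryMove hij d hβ hr hcross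
  have hB1 := map_binaryMove_eq_one hg i j hβ hr
  set Q := P * (binaryMove i j β r)⁻¹
  have hQB : Q * binaryMove i j β r = P :=
    nonsing_inv_mul_cancel_right _ _ (isUnit_det_of_map_eq_one hg hB1)
  have hβr : β * r ∈ maximalIdeal R := Ideal.mul_mem_right r _ hβ
  have hcol : ∀ l k, P l k =
      Q l k + (if k = j then Q l i * β else 0) + (if k = i then Q l j * r else 0) :=
    fun l k => by rw [← hQB, mul_binaryMove_apply]
  refine ⟨Q, e, by simpa [hB1, h1] using congrArg (Matrix.map · g) hQB,
    (congrDiag_mul_iff hB).mp (hQB ▸ hP),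
    apply_eq_zero_of_mul_binaryMove hij hβr (by rw [hQB]; exact hβP),
    fun l k hki hkj => by simpa [hki, hkj] using (hcol l k).symm, fun l hli hlj => ?_, hde⟩
  have hQlj : Q l j = 0 :=
    apply_eq_zero_of_mul_binaryMove hij hβr (by rw [hQB, hli, hlj, mul_zero])
  have hQli := hcol l i
  rw [if_neg hij, if_pos rfl, hQlj, hli, zero_mul, add_zero, add_zero] at hQli
  exact ⟨hQli.symm, hQlj⟩

lemma exists_congrDiag_row_eq_zero (hg : RingHom.ker g = maximalIdeal R) (i : n)
    (s : Finset n) (P : Matrix n n R) (d b : n → Rˣ) (h1 : P.map g = 1) (hP : CongrDiag P d b)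
    (hs : ∀ k, k ≠ i → P i k ≠ 0 → k ∈ s) :
    ∃ (Q : Matrix n n R) (e : n → Rˣ), Q.map g = 1 ∧ CongrDiag Q e b ∧
      (∀ k, k ≠ i → Q i k = 0) ∧
      (∀ l, (∀ k, k ≠ l → P l k = 0) → ∀ k, k ≠ l → Q l k = 0) ∧
      diagClass d - diagClass e ∈ AddSubgroup.closure (binaryRel R) := by
  induction s using Finset.induction_on generalizing P d with
  | empty =>
    refine ⟨P, d, h1, hP, fun k hk => ?_, fun l hl => hl, by simp⟩
    by_contra h
    exact Finset.notMem_empty k (hs k hk h)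
  | insert j s _ ih =>
    by_cases hskip : j = i ∨ P i j = 0
    · refine ih P d h1 hP fun k hk hPk => (Finset.mem_insert.mp (hs k hk hPk)).resolve_left ?_
      rintro rfl
      exact hskip.elim hk hPk
    obtain ⟨hji, hPij⟩ := not_or.mp hskip
    obtain ⟨Q, e, hQ1, hQ, hQij, hQcol, hQzero, hde⟩ :=
      exists_congrDiag_apply_eq_zero hg h1 hP (Ne.symm hji)
    obtain ⟨Q', e', hQ'1, hQ', hrow, hclean, he⟩ := ih Q e hQ1 hQ fun k hk hQk => by
      have hkj : k ≠ j := by rintro rfl; exact hQk hQij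
      rw [hQcol i k hk hkj] at hQk
      exact (Finset.mem_insert.mp (hs k hk hQk)).resolve_left hkj
    refine ⟨Q', e', hQ'1, hQ', hrow, fun l hl => hclean l fun k hk => ?_, ?_⟩
    · have hli : l ≠ i := by rintro rfl; exact hPij (hl j hji)
      -- a cleared row has a cleared column, so it is not the column `j` being cleared
      have hlj : l ≠ j := by
        rintro rfl
        exact hPij (hP.col_eq_zero (isUnit_apply_self_of_map_eq_one hg h1 l) hl i (Ne.symm hji))
      obtain ⟨hQli, hQlj⟩ := hQzero l (hl i hli.symm) (hl j hlj.symm)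
      by_cases hki : k = i
      · rwa [hki]
      by_cases hkj : k = j
      · rwa [hkj]
      rw [hQcol l k hki hkj]
      exact hl k hk
    · simpa using add_mem (AddSubgroup.subset_closure hde) he

theorem diagClass_sub_mem_closure_of_map_eq_one (hg : RingHom.ker g = maximalIdeal R)
    {P : Matrix n n R} {d b : n → Rˣ} (h1 : P.map g = 1) (hP : CongrDiag P d b) :
    diagClass d - diagClass b ∈ AddSubgroup.closure (binaryRel R) := by
  suffices ∀ (s : Finset n) (P : Matrix n n R) (d : n → Rˣ), P.map g = 1 → CongrDiag P d b →
      (∀ l ∉ s, ∀ k, k ≠ l → P l k = 0) →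
      diagClass d - diagClass b ∈ AddSubgroup.closure (binaryRel R) from
    this Finset.univ P d h1 hP fun l hl => absurd (Finset.mem_univ l) hl
  intro s
  induction s using Finset.induction_on with
  | empty =>
    intro P d h1 hP hclean
    rw [hP.diagClass_eq (isUnit_apply_self_of_map_eq_one hg h1)
      fun l => hclean l (Finset.notMem_empty l), sub_self]
    exact zero_mem _
  | insert i s _ ih =>
    intro P d h1 hP hclean
    obtain ⟨Q, e, hQ1, hQ, hrow, hkeep, he⟩ :=
      exists_congrDiag_row_eq_zero hg i Finset.univ P d b h1 hP fun k _ _ => Finset.mem_univ k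
    have := ih Q e hQ1 hQ fun l hl => by
      by_cases hli : l = i
      · rw [hli]; exact hrow
      exact hkeep l (hclean l (by simp [hli, hl]))
    simpa using add_mem he this

theorem diagClass_sub_mem_closure_of_map_eq_permMatrix (hg : RingHom.ker g = maximalIdeal R)
    {P : Matrix n n R} {d b : n → Rˣ} {σ : Equiv.Perm n} (hσ : P.map g = σ.permMatrix K)
    (hP : CongrDiag P d b) :
    diagClass d - diagClass b ∈ AddSubgroup.closure (binaryRel R) := by
  have h1 : (P.submatrix id σ).map g = 1 := by
    rw [← submatrix_map, hσ, ← Matrix.one_mul (σ.permMatrix K), PEquiv.mul_toMatrix_toPEquiv,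
      submatrix_submatrix]
    simp
  have hsum : diagClass (d ∘ σ) = diagClass d := Equiv.sum_comp σ fun k => gen (d k)
  simpa [hsum] using diagClass_sub_mem_closure_of_map_eq_one hg h1 (hP.submatrix σ)

end Elimination

section Orthogonal

lemma exists_perm_of_rows_eq_single_add {K : Type*} [Semiring K] [Nontrivial K] {n : Type*}
    [Fintype n] [DecidableEq n] {M : Matrix n n K} (h : M * Mᵀ = 1) (c : n → K) {τ : n → n}
    (hτ : ∀ i, M i = Pi.single (τ i) 1 + c) :
    ∃ σ : Equiv.Perm n, M = σ.permMatrix K + of fun _ => c := by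
  have hinj : τ.Injective := by
    intro i k hik
    by_contra hne
    have hrow : M k = M i := by rw [hτ, hτ, hik]
    have hik' : (M * Mᵀ) i k = (M * Mᵀ) i i := by simp only [mul_apply, transpose_apply, hrow]
    rw [h, one_apply_ne hne, one_apply_eq] at hik'
    exact zero_ne_one hik'
  refine ⟨Equiv.ofBijective τ hinj.bijective_of_finite, ?_⟩
  ext i j
  rw [hτ]
  simp [Pi.single_apply, eq_comm]

lemma ZMod.fin_four_exists_single_of_dotProduct_self : ∀ v : Fin 4 → ZMod 2, v ⬝ᵥ v = 1 →
    ∃ l, v = Pi.single l 1 ∨ v = Pi.single l 1 + 1 := by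
  decide

lemma ZMod.fin_four_dotProduct_self_ne_one_of_orthogonal : ∀ (l l' : Fin 4) (t : Fin 4 → ZMod 2),
    (Pi.single l 1 : Fin 4 → ZMod 2) ⬝ᵥ (Pi.single l' 1 + 1) = 0 →
    (Pi.single l 1 : Fin 4 → ZMod 2) ⬝ᵥ t = 0 → (Pi.single l' 1 + 1) ⬝ᵥ t = 0 → t ⬝ᵥ t ≠ 1 := by
  decide

lemma ZMod.exists_perm_of_mul_transpose_eq_one {M : Matrix (Fin 4) (Fin 4) (ZMod 2)}
    (h : M * Mᵀ = 1) :
    ∃ σ : Equiv.Perm (Fin 4), M = σ.permMatrix _ ∨ M = σ.permMatrix _ + of fun _ _ => 1 := by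
  have hdot : ∀ i k, M i ⬝ᵥ M k = if i = k then 1 else 0 := fun i k => by
    rw [← one_apply, ← h]
    rfl
  choose τ hτ using fun i =>
    ZMod.fin_four_exists_single_of_dotProduct_self (M i) (by simpa using hdot i i)
  by_cases hall : ∀ i, M i = Pi.single (τ i) 1
  · obtain ⟨σ, hσ⟩ := exists_perm_of_rows_eq_single_add h 0 (by simpa using hall)
    rw [show (of fun _ => (0 : Fin 4 → ZMod 2)) = 0 from rfl, add_zero] at hσ
    exact ⟨σ, Or.inl hσ⟩
  obtain ⟨i₀, hi₀⟩ := not_forall.mp hall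
  have hcompl : ∀ k, M k = Pi.single (τ k) 1 + 1 := fun k => (hτ k).resolve_left fun hk => by
    have hki : k ≠ i₀ := by rintro rfl; exact hi₀ hk
    obtain ⟨m, hmk, hmi⟩ := (by decide : ∀ i k : Fin 4, ∃ m, m ≠ i ∧ m ≠ k) k i₀
    have hi₀' := (hτ i₀).resolve_left hi₀
    refine ZMod.fin_four_dotProduct_self_ne_one_of_orthogonal (τ k) (τ i₀) (M m) ?_ ?_ ?_
      (by simpa using hdot m m)
    · simpa only [hk, hi₀', if_neg hki] using hdot k i₀
    · simpa only [hk, if_neg hmk.symm] using hdot k m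
    · simpa only [hi₀', if_neg hmi.symm] using hdot i₀ m
  obtain ⟨σ, hσ⟩ := exists_perm_of_rows_eq_single_add h 1 hcompl
  exact ⟨σ, Or.inr hσ⟩

lemma ZMod.permMatrix_add_ones_mul_transpose (σ τ : Equiv.Perm (Fin 4)) :
    (σ.permMatrix (ZMod 2) + of fun _ _ => 1) * (τ.permMatrix (ZMod 2) + of fun _ _ => 1)ᵀ =
      (τ⁻¹ * σ).permMatrix (ZMod 2) := by
  set J : Matrix (Fin 4) (Fin 4) (ZMod 2) := of fun _ _ => 1
  have hσJ : σ.permMatrix (ZMod 2) * J = J := by rw [PEquiv.toMatrix_toPEquiv_mul]; rfl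
  have hJτ : J * τ⁻¹.permMatrix (ZMod 2) = J := by rw [PEquiv.mul_toMatrix_toPEquiv]; rfl
  have hJJ : J * J = 0 := by decide
  have hJ2 : J + J = 0 := by decide
  rw [transpose_add, transpose_permMatrix, show Jᵀ = J from rfl, Matrix.add_mul, Matrix.mul_add,
    Matrix.mul_add, permMatrix_mul, hσJ, hJτ, hJJ, add_zero, add_assoc, hJ2, add_zero]

end Orthogonal

section Quaternary

variable {R : Type} [CommRing R]

def quaternaryMatrix (a b c d : Rˣ) : Matrix (Fin 4) (Fin 4) R :=
  let s : R := a * c - b * d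
  let t : R := a + b + a * b * d
  !![1, 0, ↑c⁻¹, ↑d⁻¹;
    ↑a⁻¹, ↑b⁻¹, 0, -1;
    1, -1, -↑a, 0;
    s, -(1 + a * d) * s - d * t, t, -a * s - t]

lemma congrDiag_quaternaryMatrix {a b c d u v w t : Rˣ}
    (hu : (u : R) = a + ↑c⁻¹ + ↑d⁻¹) (hv : (v : R) = ↑a⁻¹ + ↑b⁻¹ + d)
    (hw : (w : R) = a + b + a ^ 2 * c)
    (ht : (t : R) = ∑ k, ![(a : R), b, c, d] k * quaternaryMatrix a b c d 3 k ^ 2) :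
    CongrDiag (quaternaryMatrix a b c d) ![a, b, c, d] ![u, v, w, t] := by
  have ha := a.mul_inv
  have hb := b.mul_inv
  have hc := c.mul_inv
  have hd := d.mul_inv
  ext i j
  rw [mul_diagonal_mul_transpose_apply]
  fin_cases i <;> fin_cases j <;> simp [Fin.sum_univ_four, quaternaryMatrix, hu, hv, hw, ht] <;>
    grind

end Quaternary

section ResidueFieldTwo

variable {R : Type} [CommRing R] [IsLocalRing R] {g : R →+* ZMod 2}

lemma map_eq_one_iff_isUnit (hg : RingHom.ker g = maximalIdeal R) (x : R) :
    g x = 1 ↔ IsUnit x := by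
  rw [isUnit_iff_map_ne_zero hg]
  generalize g x = z
  revert z
  decide

lemma isUnit_add_add (hg : RingHom.ker g = maximalIdeal R) {x y z : R} (hx : IsUnit x)
    (hy : IsUnit y) (hz : IsUnit z) : IsUnit (x + y + z) := by
  rw [← map_eq_one_iff_isUnit hg] at hx hy hz ⊢
  rw [map_add, map_add, hx, hy, hz]
  decide

lemma map_mul_transpose_eq_one (hg : RingHom.ker g = maximalIdeal R) {n : Type*} [Fintype n]
    [DecidableEq n] {P : Matrix n n R} {a b : n → Rˣ} (hP : CongrDiag P a b) :
    P.map g * (P.map g)ᵀ = 1 := by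
  have hD : ∀ c : n → Rˣ, (diagonal fun k => (c k : R)).map g = 1 := fun c => by
    rw [diagonal_map g.map_zero]
    simp [(map_eq_one_iff_isUnit hg _).mpr]
  simpa [Matrix.map_mul, transpose_map, hD] using congrArg (Matrix.map · g) hP

lemma map_quaternaryMatrix (hg : RingHom.ker g = maximalIdeal R) (a b c d : Rˣ) :
    (quaternaryMatrix a b c d).map g =
      (finRotate 4).permMatrix (ZMod 2) + of fun _ _ => 1 := by
  have hunit : ∀ x : Rˣ, g x = 1 := fun x => (map_eq_one_iff_isUnit hg _).mpr x.isUnit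
  ext i j
  fin_cases i <;> fin_cases j <;> simp [quaternaryMatrix, hunit] <;> decide

end ResidueFieldTwo

section Presentation

variable {R : Type} [CommRing R] [IsLocalRing R]

/-- Family (2) of relations. -/
def quaternaryRel (R : Type) [CommRing R] : Set (GRing R) :=
  {x : GRing R | ∃ (a b c d u v w : Rˣ),
      (u : R) = (a : R) + ((c⁻¹ : Rˣ) : R) + ((d⁻¹ : Rˣ) : R) ∧
      (v : R) = ((a⁻¹ : Rˣ) : R) + ((b⁻¹ : Rˣ) : R) + (d : R) ∧
      (w : R) = (a : R) + (b : R) + (a : R) ^ 2 * (c : R) ∧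
      x = (gen a + gen b + gen c + gen d) -
        (gen u + gen v + gen w + gen (a * b * c * d * (u * v * w)))}

lemma binaryRel_subset_gwRel : binaryRel R ⊆ gwRel R := by
  rintro _ ⟨a, b, a', b', m, n, hm, hn, hc, ha', hb', rfl⟩
  refine ⟨![a, b, 1, 1], ![a', b', 1, 1], binaryMove 0 1 n m,
    isUnit_det_of_map_eq_one ker_residue (map_binaryMove_eq_one ker_residue 0 1 hn hm),
    congrDiag_binaryMove (by decide) (by simpa using hc) (by simpa using ha') (by simpa using hb')
      fun k hk0 hk1 => ?_, ?_⟩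
  · fin_cases k <;> simp_all
  · simp [Fin.sum_univ_four]

variable {g : R →+* ZMod 2}

lemma exists_congrDiag_quaternaryMatrix (hg : RingHom.ker g = maximalIdeal R) {a b c d u v w : Rˣ}
    (hu : (u : R) = a + ↑c⁻¹ + ↑d⁻¹) (hv : (v : R) = ↑a⁻¹ + ↑b⁻¹ + d)
    (hw : (w : R) = a + b + a ^ 2 * c) :
    ∃ t : Rˣ, gen t = gen (a * b * c * d * (u * v * w)) ∧
      CongrDiag (quaternaryMatrix a b c d) ![a, b, c, d] ![u, v, w, t] ∧
      IsUnit (quaternaryMatrix a b c d).det := by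
  have hunit : ∀ x : Rˣ, g x = 1 := fun x => (map_eq_one_iff_isUnit hg _).mpr x.isUnit
  obtain ⟨t, ht⟩ : IsUnit (∑ k, ![(a : R), b, c, d] k * quaternaryMatrix a b c d 3 k ^ 2) := by
    rw [← map_eq_one_iff_isUnit hg]
    simp [Fin.sum_univ_four, quaternaryMatrix, hunit]
    decide
  have hM := congrDiag_quaternaryMatrix hu hv hw ht
  have hdet := congrArg det hM
  rw [det_mul, det_mul, det_transpose, det_diagonal, det_diagonal] at hdet
  simp only [Fin.prod_univ_four, Matrix.cons_val] at hdet
  -- `det(M)² · abcd = uvwt`, so `t · (abcd · uvw)` is a square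
  have hdet_unit : IsUnit (quaternaryMatrix a b c d).det :=
    isUnit_of_mul_isUnit_left (isUnit_of_mul_isUnit_left (by
      rw [hdet]
      exact_mod_cast (u * v * w * t).isUnit))
  obtain ⟨δ, hδ⟩ := hdet_unit
  refine ⟨t, gen_eq_of_mul_eq_sq (s := δ * (a * b * c * d)) (Units.ext ?_), hM, ⟨δ, hδ⟩⟩
  push_cast
  rw [hδ]
  linear_combination (↑a * ↑b * ↑c * ↑d : R) * hdet.symm

lemma quaternaryRel_subset_gwRel (hg : RingHom.ker g = maximalIdeal R) :
    quaternaryRel R ⊆ gwRel R := by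
  rintro _ ⟨a, b, c, d, u, v, w, hu, hv, hw, rfl⟩
  obtain ⟨t, ht, hM, hdet⟩ := exists_congrDiag_quaternaryMatrix hg hu hv hw
  exact ⟨![a, b, c, d], ![u, v, w, t], _, hdet, hM, by simp [Fin.sum_univ_four, ht]⟩

lemma diagClass_sub_mem_closure_of_map_eq_permMatrix_add_ones
    (hg : RingHom.ker g = maximalIdeal R) {P : Matrix (Fin 4) (Fin 4) R} {a b : Fin 4 → Rˣ}
    {σ : Equiv.Perm (Fin 4)} (hσ : P.map g = σ.permMatrix (ZMod 2) + of fun _ _ => 1)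
    (hP : CongrDiag P a b) :
    diagClass a - diagClass b ∈ AddSubgroup.closure (binaryRel R ∪ quaternaryRel R) := by
  obtain ⟨u, hu⟩ := isUnit_add_add hg (a 0).isUnit (a 2)⁻¹.isUnit (a 3)⁻¹.isUnit
  obtain ⟨v, hv⟩ := isUnit_add_add hg (a 0)⁻¹.isUnit (a 1)⁻¹.isUnit (a 3).isUnit
  obtain ⟨w, hw⟩ := isUnit_add_add hg (a 0).isUnit (a 1).isUnit ((a 0) ^ 2 * a 2).isUnit
  push_cast at hw
  obtain ⟨t, ht, hM, hdet⟩ := exists_congrDiag_quaternaryMatrix hg hu hv hw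
  set M := quaternaryMatrix (a 0) (a 1) (a 2) (a 3)
  rw [show ![a 0, a 1, a 2, a 3] = a by ext i; fin_cases i <;> rfl] at hM
  have hPM : P * M⁻¹ * M = P := nonsing_inv_mul_cancel_right _ _ hdet
  have hQ : CongrDiag (P * M⁻¹) ![u, v, w, t] b := (congrDiag_mul_iff hM).mp (by rwa [hPM])
  have hQσ : (P * M⁻¹).map g = ((finRotate 4)⁻¹ * σ).permMatrix (ZMod 2) := by
    calc (P * M⁻¹).map g = (P * M⁻¹).map g * (M.map g * (M.map g)ᵀ) := by
          rw [map_mul_transpose_eq_one hg hM, Matrix.mul_one]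
      _ = P.map g * (M.map g)ᵀ := by rw [← Matrix.mul_assoc, ← Matrix.map_mul, hPM]
      _ = _ := by rw [hσ, map_quaternaryMatrix hg, ZMod.permMatrix_add_ones_mul_transpose]
  have h4 : diagClass a - diagClass ![u, v, w, t] ∈ quaternaryRel R :=
    ⟨a 0, a 1, a 2, a 3, u, v, w, hu, hv, hw, by simp [diagClass, Fin.sum_univ_four, ht]⟩
  have h2 : diagClass ![u, v, w, t] - diagClass b ∈
      AddSubgroup.closure (binaryRel R ∪ quaternaryRel R) :=
    AddSubgroup.closure_mono Set.subset_union_left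
      (diagClass_sub_mem_closure_of_map_eq_permMatrix hg hQσ hQ)
  simpa using add_mem (AddSubgroup.subset_closure (Set.mem_union_right _ h4)) h2

lemma gwRel_subset_closure (hg : RingHom.ker g = maximalIdeal R) :
    gwRel R ⊆ AddSubgroup.closure (binaryRel R ∪ quaternaryRel R) := by
  rintro _ ⟨a, b, P, -, hP, rfl⟩
  obtain ⟨σ, hσ | hσ⟩ := ZMod.exists_perm_of_mul_transpose_eq_one (map_mul_transpose_eq_one hg hP)
  · exact AddSubgroup.closure_mono Set.subset_union_left
      (diagClass_sub_mem_closure_of_map_eq_permMatrix hg hσ hP)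
  · exact diagClass_sub_mem_closure_of_map_eq_permMatrix_add_ones hg hσ hP

end Presentation

open IsLocalRing in
/-- For a commutative local ring `R` with residue field `𝔽₂`, the additive
subgroup of `ℤ[Rˣ/(Rˣ)²]` generated by the Knebusch–Rosenberg–Ware relations (i.e. the kernel of
the surjection onto `GW(R)`) coincides with the additive subgroup generated by the two explicit
families of relations (1) and (2). -/
theorem gw_presentation_of_residueField_two
    (R : Type) [CommRing R] [IsLocalRing R]
    (h2 : Nonempty (ResidueField R ≃+* ZMod 2)) :
    AddSubgroup.closure (gwRel R) =
      AddSubgroup.closure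
        ({x : GRing R | ∃ (a b a' b' : Rˣ) (m n : R),
            m ∈ maximalIdeal R ∧ n ∈ maximalIdeal R ∧
            m * (a : R) + n * (b : R) = 0 ∧
            (a' : R) = (a : R) + n ^ 2 * (b : R) ∧
            (b' : R) = (b : R) + m ^ 2 * (a : R) ∧
            x = (gen a + gen b) - (gen a' + gen b')} ∪
         {x : GRing R | ∃ (a b c d u v w : Rˣ),
            (u : R) = (a : R) + ((c⁻¹ : Rˣ) : R) + ((d⁻¹ : Rˣ) : R) ∧
            (v : R) = ((a⁻¹ : Rˣ) : R) + ((b⁻¹ : Rˣ) : R) + (d : R) ∧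
            (w : R) = (a : R) + (b : R) + (a : R) ^ 2 * (c : R) ∧
            x = (gen a + gen b + gen c + gen d) -
              (gen u + gen v + gen w + gen (a * b * c * d * (u * v * w)))}) := by
  obtain ⟨φ⟩ := h2
  have hg : RingHom.ker ((φ : ResidueField R →+* ZMod 2).comp (residue R)) = maximalIdeal R := by
    rw [RingHom.ker_comp_of_injective _ φ.injective, ker_residue]
  refine le_antisymm ((AddSubgroup.closure_le _).mpr (gwRel_subset_closure hg))
    ((AddSubgroup.closure_le _).mpr (Set.union_subset ?_ ?_))
  · exact binaryRel_subset_gwRel.trans AddSubgroup.subset_closure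
  · exact (quaternaryRel_subset_gwRel hg).trans AddSubgroup.subset_closure

end
end

section
/- Let R be a commutative local ring with maximal ideal 𝔪 whose residue field R/𝔪 is isomorphic to 𝔽₂, and let Φ be the 4×4 matrix over R with 0 in every diagonal entry and 1 in every off-diagonal entry. For all units a, b, c, d of R and D := diag(a,b,c,d), there exists an invertible 4×4 matrix P over R such that P ≡ Φ (mod 𝔪) and P·D·Pᵀ = diag(t,u,v,w), where t, u, v, w are units of R satisfying, in the group of square classes Rˣ/(Rˣ)²: [t] = [a·b·c·d·u·v·w], [u] = [a + c⁻¹ + d⁻¹], [v] = [a⁻¹ + b⁻¹ + d] and [w] = [a + b + a²·c]. -/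
noncomputable section

/-- The 4×4 matrix with `0` on the diagonal and `1` everywhere else. -/
def PhiMat (R : Type) [CommRing R] : Matrix (Fin 4) (Fin 4) R :=
  fun i j => if i = j then 0 else 1


/-! Over a local ring with residue field `𝔽₂` every unit reduces to `1` and `2 ≡ 0`, so the
explicit matrix `phiLift a b c d` reduces to `Φ`, which is invertible because `Φ² = 1` in
characteristic `2`. The rows of `phiLift a b c d` are pairwise orthogonal for `diag(a,b,c,d)`, and
the norms of the last three are `(a + c⁻¹ + d⁻¹)(cd)²`, `(a⁻¹ + b⁻¹ + d)(ab)²` and `a + b + a²c`.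
Taking determinants gives `det(P)²·abcd = tuvw`, which makes `t` a unit and fixes its square
class. -/

section SquareClasses

variable {R : Type} [CommRing R]

lemma cls_mul (x y : Rˣ) : cls (x * y) = cls x * cls y := rfl

lemma cls_sq (z : Rˣ) : cls (z ^ 2) = 1 :=
  (QuotientGroup.eq_one_iff _).mpr ⟨z, rfl⟩

lemma cls_mul_sq (x z : Rˣ) : cls (x * z ^ 2) = cls x := by
  rw [cls_mul, cls_sq, mul_one]

lemma cls_eq_of_mul_eq_sq_mul {x y z s : Rˣ} (h : x * y = s ^ 2 * z) :
    cls x = cls (z * y) := by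
  have hy : cls y * cls y = 1 := by rw [← cls_mul, ← sq, cls_sq]
  calc cls x = cls (x * y) * cls y := by rw [cls_mul, mul_assoc, hy, mul_one]
    _ = cls (z * y) := by rw [h, cls_mul, cls_mul, cls_sq, one_mul]

end SquareClasses

section Matrices

open Matrix

variable {R S : Type} [CommRing R] [CommRing S]

lemma det_mul_diagonal_mul_transpose {n : Type} [Fintype n] [DecidableEq n]
    (P : Matrix n n R) (δ : n → R) :
    (P * diagonal δ * Pᵀ).det = P.det ^ 2 * ∏ i, δ i := by
  rw [det_mul, det_mul, det_transpose, det_diagonal]; ring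

lemma isUnit_of_mul_diagonal_mul_transpose_eq {n : Type} [Fintype n] [DecidableEq n]
    {P : Matrix n n R} (hP : IsUnit P.det) {δ ε : n → R} (hδ : ∀ i, IsUnit (δ i))
    (h : P * diagonal δ * Pᵀ = diagonal ε) (i : n) : IsUnit (ε i) := by
  have hε : IsUnit (∏ i, ε i) := by
    rw [← det_diagonal, ← h, det_mul_diagonal_mul_transpose]
    exact (hP.pow 2).mul (IsUnit.prod_univ_iff.mpr hδ)
  exact IsUnit.prod_univ_iff.mp hε i

lemma phiMat_map (f : R →+* S) : (PhiMat R).map f = PhiMat S := by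
  ext i j; by_cases h : i = j <;> simp [PhiMat, h]

lemma phiMat_mul_self [CharP S 2] : PhiMat S * PhiMat S = 1 := by
  ext i j
  fin_cases i <;> fin_cases j <;>
    simp [PhiMat, mul_apply, Fin.sum_univ_four, one_apply, CharTwo.add_self_eq_zero]

def phiLift (a b c d : R) : Matrix (Fin 4) (Fin 4) R :=
  !![a * c - b * d, a * c + a * d + a ^ 2 * c * d, -(a + b + a * b * d), -(a + b + a ^ 2 * c);
     c * d, 0, -d, c;
     b, -a, 0, -(a * b);
     1, 1, a, 0]

lemma phiLift_map (f : R →+* S) (a b c d : R) :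
    (phiLift a b c d).map f = phiLift (f a) (f b) (f c) (f d) := by
  ext i j; fin_cases i <;> fin_cases j <;> simp [phiLift]

lemma phiLift_one [CharP S 2] : phiLift (1 : S) 1 1 1 = PhiMat S := by
  ext i j
  fin_cases i <;> fin_cases j <;>
    simp [phiLift, PhiMat, CharTwo.add_self_eq_zero, CharTwo.neg_eq]

lemma phiLift_mul_diagonal_mul_transpose (a b c d : R) :
    phiLift a b c d * diagonal ![a, b, c, d] * (phiLift a b c d)ᵀ =
      diagonal ![(a * c - b * d) ^ 2 * a + (a * c + a * d + a ^ 2 * c * d) ^ 2 * b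
          + (a + b + a * b * d) ^ 2 * c + (a + b + a ^ 2 * c) ^ 2 * d,
        a * (c * d) ^ 2 + c * d ^ 2 + c ^ 2 * d,
        d * (a * b) ^ 2 + a * b ^ 2 + a ^ 2 * b,
        a + b + a ^ 2 * c] := by
  ext i j; fin_cases i <;> fin_cases j <;>
    simp only [phiLift, mul_apply, transpose_apply, diagonal_apply, of_apply,
      Fin.sum_univ_four, Fin.zero_eta, Fin.mk_one, Fin.reduceFinMk, Fin.reduceEq, cons_val_zero,
      cons_val_one, cons_val_two, cons_val_three, head_cons, tail_cons, reduceIte] <;>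
    ring

end Matrices

lemma Units.add_inv_add_inv_mul_sq {R : Type} [CommRing R] (x y z : Rˣ) :
    ((x : R) + ↑y⁻¹ + ↑z⁻¹) * (↑y * ↑z) ^ 2 = x * (y * z) ^ 2 + y * z ^ 2 + y ^ 2 * z := by
  linear_combination ((y : R) * z ^ 2) * y.inv_mul + ((y : R) ^ 2 * z) * z.inv_mul

namespace IsLocalRing

variable {R : Type} [CommRing R] [IsLocalRing R] (h2 : Nonempty (ResidueField R ≃+* ZMod 2))
include h2

lemma charP_residueField_of_equiv_zmod_two : CharP (ResidueField R) 2 :=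
  charP_of_injective_ringHom (f := h2.some.symm.toRingHom) h2.some.symm.injective 2

lemma residue_eq_one_of_isUnit {r : R} (hr : IsUnit r) : residue R r = 1 := by
  have hne : h2.some (residue R r) ≠ 0 := by simpa using (residue_ne_zero_iff_isUnit r).mpr hr
  have h1 : h2.some (residue R r) = 1 := Fin.eq_one_of_ne_zero _ hne
  simpa using congrArg h2.some.symm h1

lemma isUnit_add_add {x y z : R} (hx : IsUnit x) (hy : IsUnit y) (hz : IsUnit z) :
    IsUnit (x + y + z) := by
  have := charP_residueField_of_equiv_zmod_two h2
  rw [← residue_ne_zero_iff_isUnit, map_add, map_add, residue_eq_one_of_isUnit h2 hx,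
    residue_eq_one_of_isUnit h2 hy, residue_eq_one_of_isUnit h2 hz, CharTwo.add_self_eq_zero,
    zero_add]
  exact one_ne_zero

lemma phiLift_sub_phiMat_mem (a b c d : Rˣ) (i j : Fin 4) :
    phiLift (a : R) b c d i j - PhiMat R i j ∈ maximalIdeal R := by
  have := charP_residueField_of_equiv_zmod_two h2
  rw [← residue_eq_zero_iff, map_sub, sub_eq_zero]
  have hP := phiLift_map (residue R) a b c d
  simp only [residue_eq_one_of_isUnit h2, Units.isUnit, phiLift_one] at hP
  rw [← phiMat_map (residue R)] at hP
  exact congrFun₂ hP i j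

lemma isUnit_det_of_sub_phiMat_mem {P : Matrix (Fin 4) (Fin 4) R}
    (hP : ∀ i j, P i j - PhiMat R i j ∈ maximalIdeal R) : IsUnit P.det := by
  have := charP_residueField_of_equiv_zmod_two h2
  have hPhi : P.map (residue R) = PhiMat (ResidueField R) := by
    ext i j
    rw [← phiMat_map (residue R), Matrix.map_apply, Matrix.map_apply, ← sub_eq_zero, ← map_sub,
      residue_eq_zero_iff]
    exact hP i j
  rw [← isUnit_map_iff (residue R), RingHom.map_det, RingHom.mapMatrix_apply, hPhi]
  exact Matrix.isUnit_det_of_right_inverse phiMat_mul_self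

end IsLocalRing

open IsLocalRing in
/-- Over a commutative local ring with residue field `𝔽₂`, every diagonal
matrix `diag(a,b,c,d)` with unit entries is congruent, via an invertible matrix `P ≡ Φ (mod 𝔪)`,
to a diagonal matrix `diag(t,u,v,w)` with `[t] = [abcd·uvw]`, `[u] = [a + c⁻¹ + d⁻¹]`,
`[v] = [a⁻¹ + b⁻¹ + d]` and `[w] = [a + b + a²c]` in `Rˣ/(Rˣ)²`. -/
theorem exists_congruent_phi_mod_m
    (R : Type) [CommRing R] [IsLocalRing R]
    (h2 : Nonempty (ResidueField R ≃+* ZMod 2)) (a b c d : Rˣ) :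
    ∃ (P : Matrix (Fin 4) (Fin 4) R) (t u v w : Rˣ),
      IsUnit P.det ∧
      (∀ i j, P i j - PhiMat R i j ∈ maximalIdeal R) ∧
      P * Matrix.diagonal ![(a : R), (b : R), (c : R), (d : R)] * P.transpose =
        Matrix.diagonal ![(t : R), (u : R), (v : R), (w : R)] ∧
      cls t = cls (a * b * c * d * (u * v * w)) ∧
      (∃ u' : Rˣ, (u' : R) = (a : R) + ((c⁻¹ : Rˣ) : R) + ((d⁻¹ : Rˣ) : R) ∧ cls u = cls u') ∧
      (∃ v' : Rˣ, (v' : R) = ((a⁻¹ : Rˣ) : R) + ((b⁻¹ : Rˣ) : R) + (d : R) ∧ cls v = cls v') ∧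
      (∃ w' : Rˣ, (w' : R) = (a : R) + (b : R) + (a : R) ^ 2 * (c : R) ∧ cls w = cls w') := by
  have hP := phiLift_sub_phiMat_mem h2 a b c d
  obtain ⟨s, hs⟩ := isUnit_det_of_sub_phiMat_mem h2 hP
  obtain ⟨u', hu'⟩ := isUnit_add_add h2 a.isUnit c⁻¹.isUnit d⁻¹.isUnit
  obtain ⟨v', hv'⟩ := isUnit_add_add h2 d.isUnit a⁻¹.isUnit b⁻¹.isUnit
  obtain ⟨w, hw⟩ := isUnit_add_add h2 a.isUnit b.isUnit ((a.isUnit.pow 2).mul c.isUnit)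
  set u := u' * (c * d) ^ 2
  set v := v' * (a * b) ^ 2
  have hdiag := phiLift_mul_diagonal_mul_transpose (a : R) b c d
  rw [← Units.add_inv_add_inv_mul_sq, ← Units.add_inv_add_inv_mul_sq, ← hu', ← hv',
    show (u' : R) * (c * d) ^ 2 = u by simp [u], show (v' : R) * (a * b) ^ 2 = v by simp [v],
    ← hw] at hdiag
  have hδ (i : Fin 4) : IsUnit (![(a : R), b, c, d] i) := by fin_cases i <;> simp
  obtain ⟨t, ht⟩ := isUnit_of_mul_diagonal_mul_transpose_eq ⟨s, hs⟩ hδ hdiag 0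
  rw [show ![_, (u : R), v, w] = ![(t : R), u, v, w] by rw [ht]; rfl] at hdiag
  have hdisc : t * (u * v * w) = s ^ 2 * (a * b * c * d) := by
    have := congrArg Matrix.det hdiag
    simp only [det_mul_diagonal_mul_transpose, Matrix.det_diagonal, Fin.prod_univ_four,
      Matrix.cons_val_zero, Matrix.cons_val_one, Matrix.cons_val_two, Matrix.cons_val_three,
      Matrix.head_cons, Matrix.tail_cons] at this
    ext; push_cast; rw [hs]; linear_combination -this
  exact ⟨_, t, u, v, w, ⟨s, hs⟩, hP, hdiag, cls_eq_of_mul_eq_sq_mul hdisc,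
    ⟨u', hu', cls_mul_sq _ _⟩, ⟨v', by rw [hv']; ring, cls_mul_sq _ _⟩, ⟨w, hw, rfl⟩⟩

end
end

section
/- Let (R, 𝔪) be a commutative local ring and n ≥ 1. Suppose D, P ∈ GLₙ(R) are such that (i) D and P·D·Pᵀ are diagonal matrices, and (ii) P is congruent modulo 𝔪 to a diagonal matrix. Then there exist k ≥ 0 and matrices P₁, …, P_k ∈ GLₙ(R) with P = P_k ⋯ P₁ such that, for every 0 ≤ i < k, the matrix P_{i+1} is good relative to (P_i ⋯ P₁)·D·(P₁ᵀ ⋯ P_iᵀ). -/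
noncomputable section
open IsLocalRing

def IsDiag {R : Type} [CommRing R] {n : ℕ} (M : Matrix (Fin n) (Fin n) R) : Prop :=
  ∀ i j, i ≠ j → M i j = 0

def IsGood {R : Type} [CommRing R] [IsLocalRing R] {n : ℕ}
    (D P : Matrix (Fin n) (Fin n) R) : Prop :=
  IsUnit P.det ∧
  (∃ d : Fin n → R, ∀ i j, P i j - Matrix.diagonal d i j ∈ maximalIdeal R) ∧
  (∃ s : Finset (Fin n × Fin n), s.card ≤ 2 ∧
    ∀ i j, i ≠ j → (i, j) ∉ s → P i j = 0) ∧
  IsDiag (P * D * P.transpose)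

def prodUpTo {R : Type} [CommRing R] {n : ℕ}
    (Ps : ℕ → Matrix (Fin n) (Fin n) R) : ℕ → Matrix (Fin n) (Fin n) R
  | 0 => 1
  | (i + 1) => Ps i * prodUpTo Ps i

namespace GoodFact

variable {R : Type} [CommRing R] [IsLocalRing R] {n : ℕ}
set_option linter.unusedSectionVars false

/-- all off-diagonal entries lie in the maximal ideal -/
def OffDiagM (P : Matrix (Fin n) (Fin n) R) : Prop :=
  ∀ i j : Fin n, i ≠ j → P i j ∈ maximalIdeal R

lemma offDiagM_iff (P : Matrix (Fin n) (Fin n) R) :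
    (∃ d : Fin n → R, ∀ i j, P i j - Matrix.diagonal d i j ∈ maximalIdeal R) ↔ OffDiagM P := by
  constructor
  · rintro ⟨d, hd⟩ i j hij
    have := hd i j
    rwa [Matrix.diagonal_apply_ne _ hij, sub_zero] at this
  · intro h
    refine ⟨fun i => P i i, fun i j => ?_⟩
    by_cases hij : i = j
    · subst hij; simp
    · rw [Matrix.diagonal_apply_ne _ hij, sub_zero]; exact h i j hij

lemma isDiag_eq_diagonal {M : Matrix (Fin n) (Fin n) R} (h : IsDiag M) :
    M = Matrix.diagonal (fun i => M i i) := by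
  ext i j
  by_cases hij : i = j
  · subst hij; simp
  · rw [Matrix.diagonal_apply_ne _ hij]; exact h i j hij

lemma isDiag_unit_entries {M : Matrix (Fin n) (Fin n) R} (h : IsDiag M)
    (hu : IsUnit M.det) (i : Fin n) : IsUnit (M i i) := by
  rw [isDiag_eq_diagonal h, Matrix.det_diagonal] at hu
  have h2 : (∏ a ∈ Finset.univ.erase i, M a a) * M i i = ∏ a, M a a :=
    Finset.prod_erase_mul _ _ (Finset.mem_univ i)
  rw [← h2] at hu
  exact isUnit_of_mul_isUnit_right hu

lemma diag_entry_unit {Q : Matrix (Fin n) (Fin n) R} (hu : IsUnit Q.det)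
    (ho : OffDiagM Q) (i : Fin n) : IsUnit (Q i i) := by
  by_contra hni
  have hmem : Q i i ∈ maximalIdeal R := by
    rw [IsLocalRing.mem_maximalIdeal, mem_nonunits_iff]; exact hni
  set φ := IsLocalRing.residue R
  have hQbar : Q.map φ = Matrix.diagonal (fun a => φ (Q a a)) := by
    ext a b
    by_cases hab : a = b
    · subst hab; simp [Matrix.map_apply]
    · rw [Matrix.diagonal_apply_ne _ hab]
      simp only [Matrix.map_apply]
      exact Ideal.Quotient.eq_zero_iff_mem.2 (ho a b hab)
  have hdet : IsUnit ((Q.map φ).det) := by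
    rw [show Q.map φ = φ.mapMatrix Q from rfl, ← RingHom.map_det]
    exact hu.map φ
  rw [hQbar, Matrix.det_diagonal] at hdet
  have : IsUnit (φ (Q i i)) := by
    have h2 : (∏ a ∈ Finset.univ.erase i, φ (Q a a)) * φ (Q i i) = ∏ a, φ (Q a a) :=
      Finset.prod_erase_mul _ _ (Finset.mem_univ i)
    rw [← h2] at hdet
    exact isUnit_of_mul_isUnit_right hdet
  have : φ (Q i i) ≠ 0 := this.ne_zero
  exact this (Ideal.Quotient.eq_zero_iff_mem.2 hmem)

lemma mul_diag_mul_transpose_apply {G E : Matrix (Fin n) (Fin n) R} (hE : IsDiag E)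
    (i k : Fin n) : (G * E * G.transpose) i k = ∑ a, G i a * E a a * G k a := by
  simp only [Matrix.mul_apply, Matrix.transpose_apply, Finset.sum_mul]
  rw [Finset.sum_comm]
  refine Finset.sum_congr rfl fun a _ => ?_
  rw [Fintype.sum_eq_single a (fun b hb => by rw [hE a b (Ne.symm hb), mul_zero, zero_mul])]

/-- factorization into good matrices -/
def Fact (D A : Matrix (Fin n) (Fin n) R) : Prop :=
  ∃ (k : ℕ) (Ps : ℕ → Matrix (Fin n) (Fin n) R),
    (∀ i < k, IsUnit (Ps i).det) ∧
    A = prodUpTo Ps k ∧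
    ∀ i < k, IsGood (prodUpTo Ps i * D * (prodUpTo Ps i).transpose) (Ps i)

lemma fact_one (D : Matrix (Fin n) (Fin n) R) : Fact D 1 :=
  ⟨0, fun _ => 1, fun i hi => absurd hi (Nat.not_lt_zero i), rfl,
    fun i hi => absurd hi (Nat.not_lt_zero i)⟩

lemma fact_single {D A : Matrix (Fin n) (Fin n) R} (h : IsGood D A) : Fact D A := by
  refine ⟨1, fun _ => A, fun i _ => h.1, ?_, ?_⟩
  · show A = A * prodUpTo _ 0
    rw [show prodUpTo (fun _ => A) 0 = 1 from rfl, mul_one]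
  · intro i hi
    interval_cases i
    show IsGood (prodUpTo _ 0 * D * (prodUpTo _ 0).transpose) A
    rw [show prodUpTo (fun _ => A) 0 = (1 : Matrix (Fin n) (Fin n) R) from rfl]
    rwa [Matrix.transpose_one, mul_one, one_mul]

lemma prodUpTo_congr {Ps Qs : ℕ → Matrix (Fin n) (Fin n) R} {k : ℕ}
    (h : ∀ i < k, Ps i = Qs i) : prodUpTo Ps k = prodUpTo Qs k := by
  induction k with
  | zero => rfl
  | succ k ih =>
      show Ps k * prodUpTo Ps k = Qs k * prodUpTo Qs k
      rw [h k (Nat.lt_succ_self k), ih (fun i hi => h i (Nat.lt_succ_of_lt hi))]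

lemma fact_mul {D A B : Matrix (Fin n) (Fin n) R} (h1 : Fact D A)
    (h2 : Fact (A * D * A.transpose) B) : Fact D (B * A) := by
  obtain ⟨k, Ps, hPu, hPA, hPg⟩ := h1
  obtain ⟨l, Qs, hQu, hQB, hQg⟩ := h2
  refine ⟨k + l, fun i => if i < k then Ps i else Qs (i - k), ?_, ?_, ?_⟩
  all_goals {
    have key : ∀ i : ℕ, prodUpTo (fun i => if i < k then Ps i else Qs (i - k)) (k + i)
        = prodUpTo Qs i * A := by
      intro i
      induction i with
      | zero =>
          show prodUpTo _ k = 1 * A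
          rw [one_mul, hPA]
          exact prodUpTo_congr (fun i hi => if_pos hi)
      | succ i ih =>
          show (if k + i < k then Ps (k+i) else Qs (k + i - k)) * prodUpTo _ (k+i)
              = Qs i * prodUpTo Qs i * A
          rw [if_neg (by omega), Nat.add_sub_cancel_left, ih, mul_assoc]
    have low : ∀ i ≤ k, prodUpTo (fun i => if i < k then Ps i else Qs (i - k)) i
        = prodUpTo Ps i := fun i hi =>
      prodUpTo_congr (fun a ha => if_pos (lt_of_lt_of_le ha hi))
    first
    | · intro i hi
        show IsUnit (if i < k then Ps i else Qs (i - k)).det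
        by_cases hik : i < k
        · rw [if_pos hik]; exact hPu i hik
        · rw [if_neg hik]; exact hQu (i - k) (by omega)
    | · rw [key l, ← hQB]
    | · intro i hi
        show IsGood (prodUpTo _ i * D * (prodUpTo _ i).transpose)
          (if i < k then Ps i else Qs (i - k))
        by_cases hik : i < k
        · rw [if_pos hik, low i (le_of_lt hik)]; exact hPg i hik
        · rw [if_neg hik]
          obtain ⟨i', rfl⟩ : ∃ i', i = k + i' := ⟨i - k, by omega⟩
          rw [key i', Nat.add_sub_cancel_left]
          have hg := hQg i' (by omega)
          have halg : prodUpTo Qs i' * A * D * (prodUpTo Qs i' * A).transpose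
              = prodUpTo Qs i' * (A * D * A.transpose) * (prodUpTo Qs i').transpose := by
            rw [Matrix.transpose_mul]; simp only [mul_assoc]
          rwa [halg] }



/-- the elementary good matrix: identity except in rows `t, j`. -/
def gmat (t j : Fin n) (et ej β : R) : Matrix (Fin n) (Fin n) R :=
  Matrix.of fun i k =>
    if i = t then (if k = t then 1 else if k = j then β else 0)
    else if i = j then (if k = t then -(ej*β) else if k = j then et else 0)
    else (if k = i then 1 else 0)

/-- its inverse; `v` is the inverse of `et + ej*β*β`. -/
def gmatInv (t j : Fin n) (et ej β v : R) : Matrix (Fin n) (Fin n) R :=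
  Matrix.of fun i k =>
    if i = t then (if k = t then v*et else if k = j then -(v*β) else 0)
    else if i = j then (if k = t then v*(ej*β) else if k = j then v else 0)
    else (if k = i then 1 else 0)

variable {t j : Fin n} {et ej β v : R}

lemma gmatInv_mul_gmat (htj : t ≠ j) (hv : v * (et + ej*β*β) = 1) :
    gmatInv t j et ej β v * gmat t j et ej β = 1 := by
  ext i k
  rw [Matrix.mul_apply, Matrix.one_apply]
  by_cases hit : i = t
  · rw [hit, Fintype.sum_eq_add t j htj (fun x hx => by
      simp [gmatInv, hx.1, hx.2, htj])]
    by_cases hkt : k = t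
    · rw [hkt]; simp [gmat, gmatInv, htj, htj.symm]; linear_combination hv
    · by_cases hkj : k = j
      · rw [hkj]; simp [gmat, gmatInv, htj, htj.symm]; try ring
      · simp [gmat, gmatInv, htj, htj.symm, hkt, hkj, Ne.symm hkt, Ne.symm hkj]
  · by_cases hij : i = j
    · rw [hij, Fintype.sum_eq_add t j htj (fun x hx => by
        simp [gmatInv, hx.1, hx.2, Ne.symm htj])]
      by_cases hkt : k = t
      · rw [hkt]; simp [gmat, gmatInv, htj, htj.symm]; try ring
      · by_cases hkj : k = j
        · rw [hkj]; simp [gmat, gmatInv, htj, htj.symm]; linear_combination hv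
        · simp [gmat, gmatInv, htj, htj.symm, hkt, hkj, Ne.symm hkt, Ne.symm hkj]
    · rw [Fintype.sum_eq_single i (fun x hx => by
        simp [gmatInv, hit, hij, hx])]
      by_cases hik : i = k
      · rw [← hik]; simp [gmat, gmatInv, hit, hij]
      · simp [gmat, gmatInv, hit, hij, hik, Ne.symm hik]

lemma gmat_mul_gmatInv (htj : t ≠ j) (hv : v * (et + ej*β*β) = 1) :
    gmat t j et ej β * gmatInv t j et ej β v = 1 := by
  ext i k
  rw [Matrix.mul_apply, Matrix.one_apply]
  by_cases hit : i = t
  · rw [hit, Fintype.sum_eq_add t j htj (fun x hx => by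
      simp [gmat, hx.1, hx.2, htj])]
    by_cases hkt : k = t
    · rw [hkt]; simp [gmat, gmatInv, htj, htj.symm]; linear_combination hv
    · by_cases hkj : k = j
      · rw [hkj]; simp [gmat, gmatInv, htj, htj.symm]; try ring
      · simp [gmat, gmatInv, htj, htj.symm, hkt, hkj, Ne.symm hkt, Ne.symm hkj]
  · by_cases hij : i = j
    · rw [hij, Fintype.sum_eq_add t j htj (fun x hx => by
        simp [gmat, hx.1, hx.2, Ne.symm htj])]
      by_cases hkt : k = t
      · rw [hkt]; simp [gmat, gmatInv, htj, htj.symm]; try ring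
      · by_cases hkj : k = j
        · rw [hkj]; simp [gmat, gmatInv, htj, htj.symm]; linear_combination hv
        · simp [gmat, gmatInv, htj, htj.symm, hkt, hkj, Ne.symm hkt, Ne.symm hkj]
    · rw [Fintype.sum_eq_single i (fun x hx => by
        simp [gmat, hit, hij, hx])]
      by_cases hik : i = k
      · rw [← hik]; simp [gmat, gmatInv, hit, hij]
      · simp [gmat, gmatInv, hit, hij, hik, Ne.symm hik]

lemma isUnit_gmat_det (htj : t ≠ j) (hv : v * (et + ej*β*β) = 1) :
    IsUnit (gmat t j et ej β).det :=
  Matrix.isUnit_det_of_right_inverse (gmat_mul_gmatInv htj hv)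

lemma offDiagM_gmat (htj : t ≠ j) (hβ : β ∈ maximalIdeal R) :
    OffDiagM (gmat t j et ej β) := by
  intro i k hik
  by_cases hit : i = t
  · rw [hit] at hik ⊢
    by_cases hkj : k = j
    · rw [hkj]
      simpa [gmat, Ne.symm htj] using hβ
    · simp [gmat, hkj, Ne.symm hik]
  · by_cases hij : i = j
    · rw [hij] at hik ⊢
      by_cases hkt : k = t
      · rw [hkt]
        simpa [gmat, Ne.symm htj] using neg_mem (Ideal.mul_mem_left _ ej hβ)
      · simp [gmat, hkt, Ne.symm htj, Ne.symm hik]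
    · simp [gmat, hit, hij, Ne.symm hik]

lemma isDiag_gmat_conj {E : Matrix (Fin n) (Fin n) R} (htj : t ≠ j) (hE : IsDiag E)
    (het : et = E t t) (hej : ej = E j j) :
    IsDiag (gmat t j et ej β * E * (gmat t j et ej β).transpose) := by
  subst het; subst hej
  intro i k hik
  rw [mul_diag_mul_transpose_apply hE]
  by_cases hit : i = t
  · rw [hit] at hik ⊢
    rw [Fintype.sum_eq_add t j htj (fun x hx => by simp [gmat, hx.1, hx.2, htj])]
    by_cases hkj : k = j
    · rw [hkj]
      simp [gmat, htj, Ne.symm htj]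
      try ring
    · simp [gmat, htj, hik, Ne.symm hik, hkj, Ne.symm hkj, Ne.symm htj]
  · by_cases hij : i = j
    · rw [hij] at hik ⊢
      rw [Fintype.sum_eq_add t j htj (fun x hx => by simp [gmat, hx.1, hx.2, Ne.symm htj])]
      by_cases hkt : k = t
      · rw [hkt]
        simp [gmat, htj, Ne.symm htj]
        try ring
      · simp [gmat, htj, hkt, Ne.symm hkt, hik, Ne.symm hik, Ne.symm htj]
    · rw [Fintype.sum_eq_single i (fun x hx => by simp [gmat, hit, hij, hx])]
      by_cases hkt : k = t
      · rw [hkt]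
        simp [gmat, hit, hij]
      · by_cases hkj : k = j
        · rw [hkj]
          simp [gmat, hit, hij, Ne.symm htj]
        · simp [gmat, hit, hij, hkt, hkj, hik, Ne.symm hik]

lemma isGood_gmat {E : Matrix (Fin n) (Fin n) R} (htj : t ≠ j) (hE : IsDiag E)
    (het : et = E t t) (hej : ej = E j j) (hβ : β ∈ maximalIdeal R)
    (hv : v * (et + ej*β*β) = 1) :
    IsGood E (gmat t j et ej β) := by
  refine ⟨isUnit_gmat_det htj hv, (offDiagM_iff _).2 (offDiagM_gmat htj hβ),
    ⟨⟨{(t, j), (j, t)}, ?_, ?_⟩, isDiag_gmat_conj htj hE het hej⟩⟩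
  · exact le_trans (Finset.card_insert_le _ _) (by simp)
  · intro i k hik hs
    simp only [Finset.mem_insert, Finset.mem_singleton, Prod.mk.injEq, not_or] at hs
    by_cases hit : i = t
    · have hkj : k ≠ j := fun h => hs.1 ⟨hit, h⟩
      rw [hit] at hik
      simp [gmat, hit, hkj, Ne.symm hik]
    · by_cases hij : i = j
      · have hkt : k ≠ t := fun h => hs.2 ⟨hij, h⟩
        rw [hij] at hik
        simp [gmat, hij, hit, hkt, Ne.symm hik]
      · simp [gmat, hit, hij, Ne.symm hik]

lemma mul_gmatInv_apply_other {P : Matrix (Fin n) (Fin n) R} {i k : Fin n}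
    (hkt : k ≠ t) (hkj : k ≠ j) :
    (P * gmatInv t j et ej β v) i k = P i k := by
  rw [Matrix.mul_apply, Fintype.sum_eq_single k (fun x hx => ?_)]
  · simp [gmatInv, hkt, hkj]
  · by_cases hxt : x = t
    · simp [gmatInv, hxt, hkt, hkj]
    · by_cases hxj : x = j
      · simp [gmatInv, hxj, hxt, hkt, hkj]
      · simp [gmatInv, hxt, hxj, Ne.symm hx]

lemma mul_gmatInv_apply_t {P : Matrix (Fin n) (Fin n) R} {i : Fin n} (htj : t ≠ j) :
    (P * gmatInv t j et ej β v) i t = P i t * (v*et) + P i j * (v*(ej*β)) := by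
  rw [Matrix.mul_apply, Fintype.sum_eq_add t j htj (fun x hx => ?_)]
  · simp [gmatInv, htj, Ne.symm htj]
  · simp [gmatInv, hx.1, hx.2, Ne.symm hx.1]

lemma mul_gmatInv_apply_j {P : Matrix (Fin n) (Fin n) R} {i : Fin n} (htj : t ≠ j) :
    (P * gmatInv t j et ej β v) i j = P i t * (-(v*β)) + P i j * v := by
  rw [Matrix.mul_apply, Fintype.sum_eq_add t j htj (fun x hx => ?_)]
  · simp [gmatInv, htj, Ne.symm htj]
  · simp [gmatInv, hx.1, hx.2, Ne.symm hx.2]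

lemma isUnit_add_mem {a b : R} (ha : IsUnit a) (hb : b ∈ maximalIdeal R) :
    IsUnit (a + b) := by
  by_contra h
  have h1 : a + b ∈ maximalIdeal R :=
    (IsLocalRing.mem_maximalIdeal _).2 (mem_nonunits_iff.2 h)
  have h2 : a ∈ maximalIdeal R := by
    have := sub_mem h1 hb
    simpa using this
  exact mem_nonunits_iff.1 ((IsLocalRing.mem_maximalIdeal _).1 h2) ha

lemma step {E Q : Matrix (Fin n) (Fin n) R} (t j : Fin n) (htj : t ≠ j)
    (hE : IsDiag E) (hEu : IsUnit E.det) (hQu : IsUnit Q.det) (hQo : OffDiagM Q) :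
    ∃ G Q' : Matrix (Fin n) (Fin n) R,
      IsGood E G ∧ IsUnit G.det ∧ Q = Q' * G ∧ IsUnit Q'.det ∧ OffDiagM Q' ∧
      IsDiag (G * E * G.transpose) ∧
      Q' * (G * E * G.transpose) * Q'.transpose = Q * E * Q.transpose ∧
      (∀ i k, k ≠ t → k ≠ j → Q' i k = Q i k) ∧
      Q' t j = 0 ∧
      (∀ i, Q i t = 0 → Q i j = 0 → Q' i t = 0 ∧ Q' i j = 0) := by
  obtain ⟨w, hw⟩ := (diag_entry_unit hQu hQo t).exists_left_inv
  set et := E t t with het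
  set ej := E j j with hej
  set β := w * Q t j with hβdef
  have hβ : β ∈ maximalIdeal R := Ideal.mul_mem_left _ w (hQo t j htj)
  have huu : IsUnit (et + ej*β*β) :=
    isUnit_add_mem (isDiag_unit_entries hE hEu t)
      (Ideal.mul_mem_left _ _ hβ)
  obtain ⟨v, hv⟩ := huu.exists_left_inv
  set G := gmat t j et ej β with hG
  set Ginv := gmatInv t j et ej β v with hGinv
  have hIG : Ginv * G = 1 := gmatInv_mul_gmat htj hv
  have hGI : G * Ginv = 1 := gmat_mul_gmatInv htj hv
  set Q' := Q * Ginv with hQ'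
  have hQQ' : Q = Q' * G := by
    rw [hQ', Matrix.mul_assoc, hIG, Matrix.mul_one]
  have hGu : IsUnit G.det := Matrix.isUnit_det_of_right_inverse hGI
  have hGinvu : IsUnit Ginv.det := Matrix.isUnit_det_of_right_inverse hIG
  have hQ'u : IsUnit Q'.det := by
    rw [hQ', Matrix.det_mul]; exact hQu.mul hGinvu
  have hQ'o : OffDiagM Q' := by
    intro i k hik
    by_cases hkt : k = t
    · rw [hkt] at hik ⊢
      rw [hQ', hGinv, mul_gmatInv_apply_t htj]
      exact add_mem (Ideal.mul_mem_right _ _ (hQo i t hik))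
        (Ideal.mul_mem_left _ _ (Ideal.mul_mem_left _ _ (Ideal.mul_mem_left _ _ hβ)))
    · by_cases hkj : k = j
      · rw [hkj] at hik ⊢
        rw [hQ', hGinv, mul_gmatInv_apply_j htj]
        exact add_mem (Ideal.mul_mem_left _ _ (neg_mem (Ideal.mul_mem_left _ _ hβ)))
          (Ideal.mul_mem_right _ _ (hQo i j hik))
      · rw [hQ', hGinv, mul_gmatInv_apply_other hkt hkj]
        exact hQo i k hik
  have hGEG : IsDiag (G * E * G.transpose) := isDiag_gmat_conj htj hE rfl rfl
  have hGtI : G.transpose * Ginv.transpose = 1 := by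
    rw [← Matrix.transpose_mul, hIG, Matrix.transpose_one]
  have hconj : Q' * (G * E * G.transpose) * Q'.transpose = Q * E * Q.transpose := by
    rw [hQ', Matrix.transpose_mul]
    calc Q * Ginv * (G * E * G.transpose) * (Ginv.transpose * Q.transpose)
        = Q * ((Ginv * G) * E * (G.transpose * (Ginv.transpose * Q.transpose))) := by
          simp only [Matrix.mul_assoc]
      _ = Q * E * Q.transpose := by
          rw [hIG, ← Matrix.mul_assoc G.transpose, hGtI, Matrix.one_mul,
            Matrix.one_mul, ← Matrix.mul_assoc]
  refine ⟨G, Q', isGood_gmat htj hE rfl rfl hβ hv, hGu, hQQ', hQ'u, hQ'o, hGEG, hconj,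
    ?_, ?_, ?_⟩
  · intro i k hkt hkj
    rw [hQ', hGinv, mul_gmatInv_apply_other hkt hkj]
  · rw [hQ', hGinv, mul_gmatInv_apply_j htj, hβdef]
    linear_combination (-(v * Q t j)) * hw
  · intro i h1 h2
    constructor
    · rw [hQ', hGinv, mul_gmatInv_apply_t htj, h1, h2]; ring
    · rw [hQ', hGinv, mul_gmatInv_apply_j htj, h1, h2]; ring

def ClearBelow (m : ℕ) (Q : Matrix (Fin n) (Fin n) R) : Prop :=
  ∀ i k : Fin n, (i.val < m ∨ k.val < m) → i ≠ k → Q i k = 0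

lemma conj_mul_alg (X Y D : Matrix (Fin n) (Fin n) R) :
    (X * Y) * D * (X * Y).transpose = X * (Y * D * Y.transpose) * X.transpose := by
  rw [Matrix.transpose_mul]
  simp only [Matrix.mul_assoc]

lemma inner (t : Fin n) :
    ∀ c j : ℕ, j + c = n → t.val < j →
    ∀ D Q : Matrix (Fin n) (Fin n) R,
      IsUnit D.det → IsDiag D → IsUnit Q.det → OffDiagM Q →
      IsDiag (Q * D * Q.transpose) → ClearBelow t.val Q →
      (∀ k : Fin n, t.val < k.val → k.val < j → Q t k = 0) →
    ∃ A Q' : Matrix (Fin n) (Fin n) R,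
      Fact D A ∧ Q = Q' * A ∧
      IsUnit ((A * D * A.transpose).det) ∧ IsDiag (A * D * A.transpose) ∧
      IsUnit Q'.det ∧ OffDiagM Q' ∧
      IsDiag (Q' * (A * D * A.transpose) * Q'.transpose) ∧
      ClearBelow t.val Q' ∧
      (∀ k : Fin n, t.val < k.val → Q' t k = 0) := by
  intro c
  induction c with
  | zero =>
      intro j hj htj D Q hDu hDd hQu hQo hQDQ hcb hrow
      have hone : (1 : Matrix (Fin n) (Fin n) R) * D * (1 : Matrix (Fin n) (Fin n) R).transpose = D := by
        rw [Matrix.transpose_one, Matrix.mul_one, Matrix.one_mul]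
      refine ⟨1, Q, fact_one D, by rw [Matrix.mul_one], ?_, ?_, hQu, hQo, ?_, hcb, ?_⟩
      · rw [hone]; exact hDu
      · rw [hone]; exact hDd
      · rw [hone]; exact hQDQ
      · intro k hk
        exact hrow k hk (by omega)
  | succ c ih =>
      intro j hj htj D Q hDu hDd hQu hQo hQDQ hcb hrow
      have hjn : j < n := by omega
      set jf : Fin n := ⟨j, hjn⟩ with hjf
      have htjf : t ≠ jf := Fin.ne_of_val_ne (show t.val ≠ j by omega)
      obtain ⟨G, Q', hGg, hGu, hQQ', hQ'u, hQ'o, hGEG, hconj, hoth, htj0, hpres⟩ :=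
        step t jf htjf hDd hDu hQu hQo
      have hD'u : IsUnit ((G * D * G.transpose).det) := by
        rw [Matrix.det_mul, Matrix.det_mul, Matrix.det_transpose]
        exact (hGu.mul hDu).mul hGu
      have hQ'D'Q' : IsDiag (Q' * (G * D * G.transpose) * Q'.transpose) := by
        rw [hconj]; exact hQDQ
      have hcb' : ClearBelow t.val Q' := by
        intro i k hik hne
        by_cases hkt : k = t
        · rcases hik with hik | hik
          · rw [hkt]
            refine (hpres i ?_ ?_).1
            · exact hcb i t (Or.inl hik) (hkt ▸ hne)
            · exact hcb i jf (Or.inl hik) (Fin.ne_of_val_ne (show i.val ≠ j by omega))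
          · exfalso; rw [hkt] at hik; omega
        · by_cases hkj : k = jf
          · rcases hik with hik | hik
            · rw [hkj]
              refine (hpres i ?_ ?_).2
              · have hit : i ≠ t := Fin.ne_of_val_ne (by omega)
                exact hcb i t (Or.inl hik) hit
              · exact hcb i jf (Or.inl hik) (Fin.ne_of_val_ne (show i.val ≠ j by omega))
            · exfalso
              rw [hkj] at hik
              have : (jf : Fin n).val = j := rfl
              omega
          · rw [hoth i k hkt hkj]
            exact hcb i k hik hne
      have hrow' : ∀ k : Fin n, t.val < k.val → k.val < j + 1 → Q' t k = 0 := by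
        intro k hk1 hk2
        by_cases hkj : k = jf
        · rw [hkj]; exact htj0
        · have hkjv : k.val ≠ j := fun h => hkj (Fin.ext h)
          have hkt : k ≠ t := Fin.ne_of_val_ne (by omega)
          rw [hoth t k hkt hkj]
          exact hrow k hk1 (by omega)
      obtain ⟨A', Q'', hA'f, hQ'Q'', hA'u, hA'd, hQ''u, hQ''o, hQ''d, hcb'', hrow''⟩ :=
        ih (j+1) (by omega) (by omega) (G * D * G.transpose) Q'
          hD'u hGEG hQ'u hQ'o hQ'D'Q' hcb' hrow'
      have halg : (A' * G) * D * (A' * G).transpose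
          = A' * (G * D * G.transpose) * A'.transpose := conj_mul_alg A' G D
      refine ⟨A' * G, Q'', fact_mul (fact_single hGg) hA'f, ?_, ?_, ?_, hQ''u, hQ''o, ?_,
        hcb'', hrow''⟩
      · rw [hQQ', hQ'Q'', Matrix.mul_assoc]
      · rw [halg]; exact hA'u
      · rw [halg]; exact hA'd
      · rw [halg]; exact hQ''d

lemma outer :
    ∀ c t : ℕ, t + c = n →
    ∀ D Q : Matrix (Fin n) (Fin n) R,
      IsUnit D.det → IsDiag D → IsUnit Q.det → OffDiagM Q →
      IsDiag (Q * D * Q.transpose) → ClearBelow t Q →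
      Fact D Q := by
  intro c
  induction c with
  | zero =>
      intro t ht D Q hDu hDd hQu hQo hQDQ hcb
      have hQdiag : IsDiag Q := fun i k hik => hcb i k (Or.inl (by omega)) hik
      exact fact_single ⟨hQu, (offDiagM_iff _).2 hQo,
        ⟨∅, by simp, fun i k hik _ => hQdiag i k hik⟩, hQDQ⟩
  | succ c ih =>
      intro t ht D Q hDu hDd hQu hQo hQDQ hcb
      have htn : t < n := by omega
      set tf : Fin n := ⟨t, htn⟩ with htf
      have htv : tf.val = t := rfl
      obtain ⟨A, Q', hAf, hQQ', hE'u, hE'd, hQ'u, hQ'o, hQ'E', hcb', hrow'⟩ :=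
        inner tf (n - (t+1)) (t+1) (by omega) (by omega) D Q hDu hDd hQu hQo hQDQ hcb
          (fun k hk1 hk2 => absurd hk2 (by omega))
      have hQ'row : ∀ x : Fin n, x ≠ tf → Q' tf x = 0 := by
        intro x hx
        rcases Nat.lt_trichotomy x.val t with h | h | h
        · exact hcb' tf x (Or.inr h) (Ne.symm hx)
        · exact absurd (Fin.ext h : x = tf) hx
        · exact hrow' x h
      have hQ'tt : IsUnit (Q' tf tf) := diag_entry_unit hQ'u hQ'o tf
      have hE't : IsUnit ((A * D * A.transpose) tf tf) := isDiag_unit_entries hE'd hE'u tf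
      have hcol : ∀ i : Fin n, i ≠ tf → Q' i tf = 0 := by
        intro i hi
        have h0 := hQ'E' i tf hi
        rw [mul_diag_mul_transpose_apply hE'd] at h0
        rw [Fintype.sum_eq_single tf (fun x hx => by
          rw [hQ'row x hx, mul_zero])] at h0
        rw [mul_assoc] at h0
        obtain ⟨z, hz⟩ := (hE't.mul hQ'tt).exists_right_inv
        have h2 : Q' i tf * ((A * D * A.transpose) tf tf * Q' tf tf) * z = 0 := by
          rw [h0, zero_mul]
        rwa [mul_assoc, hz, mul_one] at h2
      have hcb'' : ClearBelow (t+1) Q' := by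
        intro i k hik hne
        by_cases hit : i = tf
        · rw [hit]
          exact hQ'row k (fun h => hne (hit ▸ h ▸ rfl))
        · by_cases hkt : k = tf
          · rw [hkt]
            exact hcol i hit
          · have hiv : i.val ≠ t := fun h => hit (Fin.ext h)
            have hkv : k.val ≠ t := fun h => hkt (Fin.ext h)
            exact hcb' i k (by omega) hne
      have hfact' : Fact (A * D * A.transpose) Q' :=
        ih (t+1) (by omega) (A * D * A.transpose) Q' hE'u hE'd hQ'u hQ'o hQ'E' hcb''
      rw [hQQ']
      exact fact_mul hAf hfact'

end GoodFact

/-- If `D` and `P·D·Pᵀ` are diagonal, `D, P ∈ GLₙ(R)` and `P` is congruent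
modulo `𝔪` to a diagonal matrix, then `P` factors as a product `P = P_k ⋯ P₁` of invertible
matrices such that each `P_{i+1}` is good relative to `(P_i ⋯ P₁) · D · (P_i ⋯ P₁)ᵀ`. -/
theorem factorization_into_good_matrices
    (R : Type) [CommRing R] [IsLocalRing R] (n : ℕ) (hn : 1 ≤ n)
    (D P : Matrix (Fin n) (Fin n) R)
    (hD : IsUnit D.det) (hP : IsUnit P.det)
    (hDdiag : IsDiag D) (hPDP : IsDiag (P * D * P.transpose))
    (hPmod : ∃ d : Fin n → R, ∀ i j, P i j - Matrix.diagonal d i j ∈ maximalIdeal R) :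
    ∃ (k : ℕ) (Ps : ℕ → Matrix (Fin n) (Fin n) R),
      (∀ i < k, IsUnit (Ps i).det) ∧
      P = prodUpTo Ps k ∧
      ∀ i < k,
        IsGood (prodUpTo Ps i * D * (prodUpTo Ps i).transpose) (Ps i) := by
  have hP' : GoodFact.OffDiagM P := (GoodFact.offDiagM_iff P).1 hPmod
  have hcb : GoodFact.ClearBelow 0 P := fun i k h _ => absurd h (by omega)
  obtain ⟨k, Ps, h1, h2, h3⟩ :=
    GoodFact.outer n 0 (by omega) D P hD hDdiag hP hP' hPDP hcb
  exact ⟨k, Ps, h1, h2, h3⟩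

end
end

section
/- There is an isomorphism of abelian groups ℤ × ℤ/4 ≅ GW(ℤ/4) sending (1, 0) to [1] and (0, 1) to ⟨⟨3⟩⟩ = [1] − [3]. In particular, the element [1] − [3] has additive order 4 in GW(ℤ/4). -/
noncomputable section

/-!
The unit group of `ℤ/4` is `{±1}` and squares are trivial, so `GW(ℤ/4)` is generated by `[1]` and
`[-1]`. Left multiplication by the quaternion `1 + i + j`, of norm `3 = -1`, is an isometry
`4⟨1⟩ ≅ 4⟨-1⟩`, so `⟨⟨-1⟩⟩` has order dividing `4` and `ℤ × ℤ/4 → GW(ℤ/4)` is surjective.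
For injectivity, the Gauss sum `∑ₓ i^q(x)` of a diagonal form `⟨u₁, …, uₙ⟩` over `ℤ/4` factors as
`∏ 2(1 + i^uₖ) = (2(1 + i))ⁿ · i^(∑ phase uₖ)` with `phase 1 = 0`, `phase (-1) = -1`; it is
invariant under change of variables, so rank and total phase give an additive left inverse
`GW(ℤ/4) → ℤ × ℤ/4`.
-/

open Matrix

theorem AddChar.map_sum_eq_prod {ι A M : Type*} [AddCommMonoid A] [CommMonoid M]
    (χ : AddChar A M) (s : Finset ι) (f : ι → A) : χ (∑ i ∈ s, f i) = ∏ i ∈ s, χ (f i) :=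
  map_prod χ.toMonoidHom (fun i => Multiplicative.ofAdd (f i)) s

theorem Ideal.toAddSubgroup_span_le_ker {A M : Type*} [CommRing A] [AddCommGroup M] (f : A →+ M)
    {S : Set A} (h : ∀ s ∈ S, ∀ r, f (r * s) = 0) : (Ideal.span S).toAddSubgroup ≤ f.ker := by
  intro x hx
  suffices ∀ r, f (r * x) = 0 by simpa using this 1
  induction hx using Submodule.span_induction with
  | mem s hs => exact h s hs
  | zero => simp
  | add x y _ _ hx hy => simp [mul_add, hx, hy]
  | smul a x _ hx => simp [← mul_assoc, hx]

namespace GW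

variable {R : Type} [CommRing R]

theorem gen_mul_gen (a b : Rˣ) : gen a * gen b = gen (a * b) :=
  (map_mul (MonoidAlgebra.of ℤ (SqCl R)) (cls a) (cls b)).symm

theorem gen_mul_mem_gwRel (u : Rˣ) {s : GRing R} (hs : s ∈ gwRel R) : gen u * s ∈ gwRel R := by
  obtain ⟨a, b, P, hP, h, rfl⟩ := hs
  have diagonal_units_mul (c : Fin 4 → Rˣ) :
      diagonal (fun i => ((u * c i : Rˣ) : R)) = (u : R) • diagonal (fun i => (c i : R)) := by
    simp [← diagonal_smul, Pi.smul_def]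
  refine ⟨(u * a ·), (u * b ·), P, hP, ?_, ?_⟩
  · rw [diagonal_units_mul, diagonal_units_mul, mul_smul_comm, smul_mul_assoc, h]
  · simp [mul_sub, Finset.mul_sum, gen_mul_gen]

theorem toAddSubgroup_span_gwRel_le_ker {M : Type*} [AddCommGroup M] (f : GRing R →+ M)
    (hf : ∀ s ∈ gwRel R, f s = 0) : (Ideal.span (gwRel R)).toAddSubgroup ≤ f.ker := by
  refine Ideal.toAddSubgroup_span_le_ker f fun s hs r => ?_
  induction r using MonoidAlgebra.induction_on with
  | of q =>
    obtain ⟨u, rfl⟩ := QuotientGroup.mk_surjective q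
    exact hf _ (gen_mul_mem_gwRel u hs)
  | add x y hx hy => rw [add_mul, map_add, hx, hy, add_zero]
  | smul c x hx => rw [smul_mul_assoc, map_zsmul, hx, smul_zero]

theorem sum_gw_eq_of_isometry {a b : Fin 4 → Rˣ} {P : Matrix (Fin 4) (Fin 4) R}
    (hP : IsUnit P.det)
    (h : P * diagonal (fun i => (a i : R)) * Pᵀ = diagonal (fun i => (b i : R))) :
    ∑ i, gw (a i) = ∑ i, gw (b i) := by
  simp only [gw, ← map_sum]
  exact Ideal.Quotient.eq.mpr (Ideal.subset_span ⟨a, b, P, hP, h, rfl⟩)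

theorem closure_range_gw : AddSubgroup.closure (Set.range (gw (R := R))) = ⊤ := by
  rw [eq_top_iff]
  rintro x -
  obtain ⟨r, rfl⟩ := Ideal.Quotient.mk_surjective x
  induction r using MonoidAlgebra.induction_on with
  | of q =>
    obtain ⟨u, rfl⟩ := QuotientGroup.mk_surjective q
    exact AddSubgroup.subset_closure ⟨u, rfl⟩
  | add x y hx hy => rw [map_add]; exact add_mem hx hy
  | smul c x hx => rw [map_zsmul]; exact zsmul_mem hx c

end GW

section QuadraticFormSums

variable {R M n : Type*} [CommRing R] [Fintype R] [Fintype n] [DecidableEq n]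

theorem sum_comp_quadForm_mul_mul_transpose [AddCommMonoid M] (f : R → M) (A : Matrix n n R)
    {P : Matrix n n R} (hP : IsUnit P.det) :
    ∑ x : n → R, f (x ⬝ᵥ (P * A * Pᵀ) *ᵥ x) =
      ∑ x : n → R, f (x ⬝ᵥ A *ᵥ x) := by
  have hPt : Function.Bijective Pᵀ.mulVec :=
    (mulVec_surjective_iff_isUnit.mpr ((isUnit_iff_isUnit_det _).mpr
      (by rwa [det_transpose]))).bijective_of_finite
  refine (Fintype.sum_congr _ _ fun x => ?_).trans (hPt.sum_comp fun y => f (y ⬝ᵥ A *ᵥ y))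
  rw [← mulVec_mulVec, ← mulVec_mulVec, dotProduct_mulVec, ← mulVec_transpose]

theorem sum_addChar_quadForm_diagonal [CommRing M] (χ : AddChar R M) (a : n → R) :
    ∑ x : n → R, χ (x ⬝ᵥ diagonal a *ᵥ x) = ∏ i, ∑ t, χ (a i * t ^ 2) := by
  rw [Fintype.prod_sum]
  refine Fintype.sum_congr _ _ fun x => ?_
  simp only [dotProduct, mulVec_diagonal, AddChar.map_sum_eq_prod]
  exact Fintype.prod_congr _ _ fun i => by ring_nf

end QuadraticFormSums

namespace ZModFour

open Complex

def iChar : AddChar (ZMod 4) ℂ := AddChar.zmodChar 4 I_pow_four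

def phase (u : (ZMod 4)ˣ) : ZMod 4 := if u = 1 then 0 else -1

theorem phase_one : phase 1 = 0 := rfl

theorem phase_neg_one : phase (-1) = -1 := by decide

theorem unit_eq_one_or_neg_one (u : (ZMod 4)ˣ) : u = 1 ∨ u = -1 := by
  revert u; decide

theorem sum_iChar_mul_sq (a : ZMod 4) : ∑ t : ZMod 4, iChar (a * t ^ 2) = 2 * (1 + iChar a) := by
  have squares : ((0 : ZMod 4) ^ 2, (1 : ZMod 4) ^ 2, (2 : ZMod 4) ^ 2, (3 : ZMod 4) ^ 2) =
      (0, 1, 0, 1) := by decide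
  simp only [Prod.mk.injEq] at squares
  rw [show ∑ t : ZMod 4, iChar (a * t ^ 2) =
      iChar (a * 0 ^ 2) + iChar (a * 1 ^ 2) + iChar (a * 2 ^ 2) + iChar (a * 3 ^ 2) from
    Fin.sum_univ_four _]
  simp only [squares, mul_zero, mul_one, AddChar.map_zero_eq_one]
  ring

theorem one_add_iChar_eq_mul_iChar_phase (u : (ZMod 4)ˣ) :
    1 + iChar u = (1 + I) * iChar (phase u) := by
  have h1 : iChar 1 = I := pow_one I
  have h3 : iChar (-1) = -I := by
    rw [iChar, AddChar.zmodChar_apply, show (-1 : ZMod 4).val = 3 from rfl, I_pow_three]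
  rcases unit_eq_one_or_neg_one u with rfl | rfl
  · rw [phase_one, Units.val_one, h1, AddChar.map_zero_eq_one, mul_one]
  · rw [phase_neg_one, Units.val_neg, Units.val_one, h3]
    linear_combination I_sq

theorem iChar_injective : Function.Injective iChar := fun a b h =>
  ZMod.val_injective 4 (isPrimitiveRoot_I.pow_inj (ZMod.val_lt a) (ZMod.val_lt b) h)

theorem sum_phase_eq_of_isometry {n : Type*} [Fintype n] [DecidableEq n] {a b : n → (ZMod 4)ˣ}
    {P : Matrix n n (ZMod 4)} (hP : IsUnit P.det)
    (h : P * diagonal (fun i => (a i : ZMod 4)) * Pᵀ = diagonal (fun i => (b i : ZMod 4))) :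
    ∑ i, phase (a i) = ∑ i, phase (b i) := by
  have gaussSum (c : n → (ZMod 4)ˣ) :
      ∑ x : n → ZMod 4, iChar (x ⬝ᵥ diagonal (fun i => (c i : ZMod 4)) *ᵥ x) =
        (2 * (1 + I)) ^ Fintype.card n * iChar (∑ i, phase (c i)) := by
    rw [sum_addChar_quadForm_diagonal, AddChar.map_sum_eq_prod, ← Finset.card_univ,
      ← Finset.prod_const, ← Finset.prod_mul_distrib]
    refine Fintype.prod_congr _ _ fun i => ?_
    rw [sum_iChar_mul_sq, one_add_iChar_eq_mul_iChar_phase, mul_assoc]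
  have hne : (2 * (1 + I)) ^ Fintype.card n ≠ 0 :=
    pow_ne_zero _ (mul_ne_zero two_ne_zero fun h => by simpa using congrArg re h)
  apply iChar_injective
  rw [← mul_right_inj' hne, ← gaussSum, ← gaussSum, ← h,
    sum_comp_quadForm_mul_mul_transpose _ _ hP]

theorem squareUnits_zmod_four : squareUnits (ZMod 4) = ⊥ := by
  refine eq_bot_iff.mpr ?_
  rintro _ ⟨u, rfl⟩
  exact Subgroup.mem_bot.mpr (by revert u; decide)

def sqClEquivUnits : SqCl (ZMod 4) ≃* (ZMod 4)ˣ :=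
  (QuotientGroup.quotientMulEquivOfEq squareUnits_zmod_four).trans QuotientGroup.quotientBot

def gwInvariant : GRing (ZMod 4) →+ ℤ × ZMod 4 :=
  (Finsupp.liftAddHom fun q => zmultiplesHom _ (1, phase (sqClEquivUnits q))).comp
    MonoidAlgebra.coeffAddEquiv.toAddMonoidHom

theorem gwInvariant_gen (u : (ZMod 4)ˣ) : gwInvariant (gen u) = (1, phase u) :=
  (Finsupp.liftAddHom_apply_single _ _ _).trans (one_zsmul _)

theorem gwInvariant_eq_zero_of_mem_gwRel {s : GRing (ZMod 4)} (hs : s ∈ gwRel (ZMod 4)) :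
    gwInvariant s = 0 := by
  obtain ⟨a, b, P, hP, h, rfl⟩ := hs
  rw [map_sub, sub_eq_zero]
  ext <;> simp [gwInvariant_gen, Prod.fst_sum, Prod.snd_sum, sum_phase_eq_of_isometry hP h]

def ofGW : GW (ZMod 4) →+ ℤ × ZMod 4 :=
  QuotientAddGroup.lift _ gwInvariant
    (GW.toAddSubgroup_span_gwRel_le_ker _ fun _ => gwInvariant_eq_zero_of_mem_gwRel)

theorem ofGW_gw (u : (ZMod 4)ˣ) : ofGW (gw u) = (1, phase u) := gwInvariant_gen u

/-- Left multiplication by the quaternion `1 + i + j`, whose norm `3` is `-1` in `ℤ/4`. -/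
def quaternionMatrix : Matrix (Fin 4) (Fin 4) (ZMod 4) :=
  !![1, -1, -1, 0; 1, 1, 0, -1; 1, 0, 1, 1; 0, 1, -1, 1]

theorem quaternionMatrix_mul_transpose :
    quaternionMatrix * quaternionMatrixᵀ = diagonal fun _ => -1 := by
  decide

theorem four_smul_gw_one_eq_four_smul_gw_neg_one : 4 • gw (1 : (ZMod 4)ˣ) = 4 • gw (-1) := by
  have hP : IsUnit quaternionMatrix.det := isUnit_det_of_right_inverse (B := -quaternionMatrixᵀ)
    (by rw [mul_neg, quaternionMatrix_mul_transpose]; simp)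
  simpa using GW.sum_gw_eq_of_isometry (a := fun _ => 1) (b := fun _ => -1) hP
    (by simpa using quaternionMatrix_mul_transpose)

def toGW : ℤ × ZMod 4 →+ GW (ZMod 4) :=
  (zmultiplesHom _ (gw 1)).coprod <| ZMod.lift 4
    ⟨zmultiplesHom _ (gw 1 - gw (-1)), by
      rw [zmultiplesHom_apply, smul_sub, sub_eq_zero]
      exact_mod_cast four_smul_gw_one_eq_four_smul_gw_neg_one⟩

theorem toGW_apply (m k : ℤ) : toGW (m, k) = m • gw 1 + k • (gw 1 - gw (-1)) := by
  simp [toGW]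

theorem ofGW_toGW : Function.LeftInverse ofGW toGW := by
  rintro ⟨m, n⟩
  obtain ⟨k, rfl⟩ := ZMod.intCast_surjective n
  rw [toGW_apply, map_add, map_zsmul, map_zsmul, map_sub, ofGW_gw, ofGW_gw, phase_one,
    phase_neg_one]
  ext <;> simp

theorem toGW_surjective : Function.Surjective toGW := by
  rw [← AddMonoidHom.range_eq_top, eq_top_iff, ← GW.closure_range_gw, AddSubgroup.closure_le]
  rintro _ ⟨u, rfl⟩
  rcases unit_eq_one_or_neg_one u with rfl | rfl
  · exact ⟨(1, 0), by simpa using toGW_apply 1 0⟩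
  · exact ⟨(1, ((-1 : ℤ) : ZMod 4)), by rw [toGW_apply]; abel⟩

def gwEquiv : ℤ × ZMod 4 ≃+ GW (ZMod 4) :=
  AddEquiv.ofBijective toGW ⟨ofGW_toGW.injective, toGW_surjective⟩

end ZModFour

/-- `GW(ℤ/4) ≅ ℤ × ℤ/4` as abelian groups, via `(1,0) ↦ [1]` and
`(0,1) ↦ ⟨⟨3⟩⟩ = [1] − [3]`; in particular `[1] − [3]` has additive order `4`. -/
theorem gw_zmod_four :
    (∃ e : ℤ × ZMod 4 ≃+ GW (ZMod 4),
      e (1, 0) = gw 1 ∧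
      e (0, 1) = gw 1 - gw (ZMod.unitOfCoprime 3 (by decide))) ∧
    addOrderOf (gw (R := ZMod 4) 1 - gw (ZMod.unitOfCoprime 3 (by decide))) = 4 := by
  have three_eq : ZMod.unitOfCoprime 3 (by decide : Nat.Coprime 3 4) = -1 := by decide
  have h10 : ZModFour.toGW (1, 0) = gw 1 := by simpa using ZModFour.toGW_apply 1 0
  have h01 : ZModFour.toGW (0, 1) = gw 1 - gw (-1) := by simpa using ZModFour.toGW_apply 0 1
  rw [three_eq]
  refine ⟨⟨ZModFour.gwEquiv, h10, h01⟩, ?_⟩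
  rw [← h01, addOrderOf_injective _ ZModFour.ofGW_toGW.injective, Prod.addOrderOf_mk,
    addOrderOf_zero, ZMod.addOrderOf_one]
  rfl

end
end

section
/- For every n ≥ 3, the ring homomorphism GW(ℤ/2^{n+1}) → GW(ℤ/2ⁿ) induced by the canonical projection ℤ/2^{n+1} → ℤ/2ⁿ (sending [a] to [ā], where ā is the image of the unit a) is a ring isomorphism. -/
/-!
The projection `ℤ/2ⁿ⁺¹ → ℤ/2ⁿ` is surjective with kernel `(2c)`, where `c = 2ⁿ⁻¹` satisfies
`c² = 0` as soon as `n ≥ 3`. Such a thickening is invisible to diagonal forms. Units lift, and a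
unit `≡ 1 mod 2c` is a square, since `1 + 2ct = (1 + ct)²`; so the projection induces an
isomorphism of square-class groups, hence of group rings. A congruence
`P diag(a) Pᵀ ≡ diag(b) mod 2c` lifts to an equality: the lifted error `M - diag(b)` is symmetric
with entries in `(2c)`, so it can be written `c (G + Gᵀ)`, and then `Q = 1 - c G diag(b)⁻¹`
satisfies `Q M Qᵀ = diag(b)` because `c²` kills all other terms. Hence the isomorphism of group
rings matches the relation ideals.
-/

noncomputable section

namespace Matrix

variable {R : Type*} [CommRing R] {ι : Type*}

theorem exists_mul_add_smul_mul_transpose_eq [Fintype ι] [DecidableEq ι] {c : R}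
    (hc : c * c = 0) {D : Matrix ι ι R} (hD : IsUnit D.det) (hDsymm : Dᵀ = D)
    (G : Matrix ι ι R) :
    ∃ Q : Matrix ι ι R, IsUnit Q.det ∧ Q * (D + c • (G + Gᵀ)) * Qᵀ = D := by
  obtain ⟨M, hM⟩ : ∃ M, M = D + c • (G + Gᵀ) := ⟨_, rfl⟩
  rw [← hM]
  set N := c • (G * D⁻¹)
  have hcc (X Y : Matrix ι ι R) : c • X * (c • Y) = 0 := by
    rw [Matrix.smul_mul, Matrix.mul_smul, smul_smul, hc, zero_smul]
  have hNM : N * M = c • G := by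
    rw [hM, Matrix.mul_add, hcc, add_zero, Matrix.smul_mul, Matrix.mul_assoc,
      nonsing_inv_mul _ hD, Matrix.mul_one]
  have hMN : M * Nᵀ = c • Gᵀ := by
    have hMsymm : Mᵀ = M := by
      simp only [hM, transpose_add, transpose_smul, transpose_transpose, hDsymm, add_comm Gᵀ G]
    rw [← hMsymm, ← transpose_mul, hNM, transpose_smul]
  refine ⟨1 - N, ?_, ?_⟩
  · have hNN : N * N = 0 := hcc _ _
    refine (isUnit_iff_isUnit_det _).1 (isUnit_iff_exists.2 ⟨1 + N, ?_, ?_⟩) <;>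
      noncomm_ring [hNN]
  · calc (1 - N) * M * (1 - N)ᵀ = M - N * M - M * Nᵀ + N * M * Nᵀ := by
          rw [transpose_sub, transpose_one]; noncomm_ring
      _ = D := by
          rw [hNM, hMN, transpose_smul, hcc, hM, smul_add]; abel

theorem exists_eq_smul_add_transpose [LinearOrder ι] (c : R) {F : Matrix ι ι R}
    (hF : Fᵀ = F) (hdvd : ∀ i j, 2 * c ∣ F i j) : ∃ G : Matrix ι ι R, F = c • (G + Gᵀ) := by
  choose f hf using hdvd
  refine ⟨of fun i j => if i < j then 2 * f i j else if i = j then f i j else 0, ?_⟩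
  ext i j
  simp only [smul_apply, add_apply, transpose_apply, of_apply, smul_eq_mul]
  rcases lt_trichotomy i j with h | rfl | h
  · simp only [hf, h, ↓reduceIte, not_lt.2 h.le, h.ne', add_zero]; ring
  · simp only [hf, lt_self_iff_false, ↓reduceIte]; ring
  · rw [← hF, transpose_apply]
    simp only [hf, not_lt.2 h.le, ↓reduceIte, h.ne', h, zero_add]; ring

end Matrix

section UnitsLift

variable {R S : Type*} [CommRing R] [CommRing S] {f : R →+* S} {c : R}

theorem isUnit_of_isUnit_map (hf : Function.Surjective f) (hc : c * c = 0)
    (hker : ∀ x, f x = 0 → 2 * c ∣ x) {x : R} (hx : IsUnit (f x)) : IsUnit x := by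
  obtain ⟨y, hy⟩ := hf ↑hx.unit⁻¹
  obtain ⟨t, ht⟩ := hker (x * y - 1) (by simp [hy])
  have hnil : IsNilpotent (2 * c * t) := ⟨2, by linear_combination (4 * t ^ 2) * hc⟩
  exact isUnit_of_mul_isUnit_left (x := x) (y := y)
    (by rw [sub_eq_iff_eq_add'.1 ht]; exact hnil.isUnit_one_add)

theorem exists_units_map_eq (hf : Function.Surjective f) (hc : c * c = 0)
    (hker : ∀ x, f x = 0 → 2 * c ∣ x) (s : Sˣ) : ∃ u : Rˣ, Units.map (f : R →* S) u = s := by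
  obtain ⟨x, hx⟩ := hf s
  have hu : IsUnit x := isUnit_of_isUnit_map hf hc hker (hx ▸ s.isUnit)
  exact ⟨hu.unit, Units.ext hx⟩

end UnitsLift

namespace SqCl

variable {R S : Type} [CommRing R] [CommRing S]

theorem cls_surjective : Function.Surjective (cls : Rˣ → SqCl R) :=
  QuotientGroup.mk_surjective

theorem cls_eq_cls_iff {a b : Rˣ} : cls a = cls b ↔ ∃ w : Rˣ, w * w = a⁻¹ * b := by
  refine (QuotientGroup.eq (s := squareUnits R)).trans ?_
  simp only [squareUnits, MonoidHom.mem_range, powMonoidHom_apply, sq]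

def map (f : R →+* S) : SqCl R →* SqCl S :=
  QuotientGroup.map _ _ (Units.map (f : R →* S)) (by
    rintro _ ⟨w, rfl⟩
    exact ⟨Units.map (f : R →* S) w, (map_pow _ _ _).symm⟩)

theorem map_cls (f : R →+* S) (a : Rˣ) : map f (cls a) = cls (Units.map (f : R →* S) a) := rfl

variable {f : R →+* S} {c : R}

theorem cls_eq_cls_of_map_eq (hc : c * c = 0) (hker : ∀ x, f x = 0 → 2 * c ∣ x)
    {u v : Rˣ} (h : f u = f v) : cls u = cls v := by
  obtain ⟨t, ht⟩ := hker (↑(u⁻¹ * v) - 1) (by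
    rw [Units.val_mul, map_sub, map_mul, ← h, ← map_mul, Units.inv_mul, map_one, sub_self])
  have hnil : IsNilpotent (c * t) := ⟨2, by linear_combination t ^ 2 * hc⟩
  refine cls_eq_cls_iff.2 ⟨hnil.isUnit_one_add.unit, Units.ext ?_⟩
  simp only [Units.val_mul, IsUnit.unit_spec] at ht ⊢
  linear_combination t ^ 2 * hc - ht

theorem map_bijective (hf : Function.Surjective f) (hc : c * c = 0)
    (hker : ∀ x, f x = 0 → 2 * c ∣ x) : Function.Bijective (map f) := by
  refine ⟨(injective_iff_map_eq_one _).2 fun x hx => ?_, fun x => ?_⟩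
  · obtain ⟨u, rfl⟩ := cls_surjective x
    obtain ⟨w, hw⟩ := cls_eq_cls_iff.1 (show cls (Units.map (f : R →* S) u) = cls 1 from hx)
    obtain ⟨w, rfl⟩ := exists_units_map_eq hf hc hker w
    calc cls u = cls (u * (w * w)) := cls_eq_cls_iff.2 ⟨w, by group⟩
      _ = cls 1 := cls_eq_cls_of_map_eq hc hker (by
        simp only [Units.ext_iff, Units.coe_map, Units.val_mul, MonoidHom.coe_coe, map_mul,
          mul_one] at hw ⊢
        rw [hw, Units.val_one, map_one]; exact Units.mul_inv (Units.map (f : R →* S) u))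
      _ = 1 := rfl
  · obtain ⟨s, rfl⟩ := cls_surjective x
    obtain ⟨u, rfl⟩ := exists_units_map_eq hf hc hker s
    exact ⟨cls u, rfl⟩

end SqCl

section DiagonalCongruent

open Matrix

variable {R S : Type*} [CommRing R] [CommRing S] {ι : Type*} [Fintype ι] [DecidableEq ι]

def DiagonalCongruent (a b : ι → Rˣ) : Prop :=
  ∃ P : Matrix ι ι R, IsUnit P.det ∧
    P * diagonal (fun i => (a i : R)) * Pᵀ = diagonal (fun i => (b i : R))

theorem DiagonalCongruent.map (f : R →+* S) {a b : ι → Rˣ} (h : DiagonalCongruent a b) :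
    DiagonalCongruent (fun i => Units.map (f : R →* S) (a i))
      (fun i => Units.map (f : R →* S) (b i)) := by
  obtain ⟨P, hP, hPab⟩ := h
  refine ⟨P.map f, by rw [← RingHom.mapMatrix_apply, ← RingHom.map_det]; exact hP.map f, ?_⟩
  simpa [Matrix.map_mul, transpose_map, diagonal_map] using congrArg (Matrix.map · f) hPab

theorem DiagonalCongruent.of_map [LinearOrder ι] {f : R →+* S} {c : R}
    (hf : Function.Surjective f) (hc : c * c = 0) (hker : ∀ x, f x = 0 → 2 * c ∣ x)
    {a b : ι → Rˣ}
    (h : DiagonalCongruent (fun i => Units.map (f : R →* S) (a i))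
      (fun i => Units.map (f : R →* S) (b i))) :
    DiagonalCongruent a b := by
  obtain ⟨P, hP, hPab⟩ := h
  obtain ⟨P, rfl⟩ : ∃ P' : Matrix ι ι R, P'.map f = P :=
    ⟨P.map (Function.surjInv hf), by ext; simp [Function.surjInv_eq hf]⟩
  set M := P * diagonal (fun i => (a i : R)) * Pᵀ
  set D := diagonal (fun i => (b i : R))
  have hMD : (M - D).map f = 0 := by
    rw [Matrix.map_sub f (map_sub f), sub_eq_zero]
    simpa [M, D, Matrix.map_mul, transpose_map, diagonal_map] using hPab
  obtain ⟨G, hG⟩ := exists_eq_smul_add_transpose c (F := M - D)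
    (by simp [M, D, transpose_sub, Matrix.mul_assoc])
    (fun i j => hker _ (congrFun (congrFun hMD i) j))
  have hD : IsUnit D.det := by simp [D, det_diagonal]
  obtain ⟨Q, hQ, hQD⟩ := exists_mul_add_smul_mul_transpose_eq hc hD (diagonal_transpose _) G
  refine ⟨Q * P, ?_, ?_⟩
  · rw [det_mul]
    refine hQ.mul (isUnit_of_isUnit_map hf hc hker ?_)
    rwa [RingHom.map_det]
  · rw [← hG, add_sub_cancel] at hQD
    calc Q * P * diagonal (fun i => (a i : R)) * (Q * P)ᵀ = Q * M * Qᵀ := by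
          simp only [M, transpose_mul, Matrix.mul_assoc]
      _ = D := hQD

end DiagonalCongruent

section GrothendieckWitt

open SqCl MonoidAlgebra

variable {R S : Type} [CommRing R] [CommRing S]

theorem sub_mem_gwRel {a b : Fin 4 → Rˣ} (h : DiagonalCongruent a b) :
    ∑ i, gen (a i) - ∑ i, gen (b i) ∈ gwRel R :=
  let ⟨P, hP, hPab⟩ := h
  ⟨a, b, P, hP, hPab, rfl⟩

def SqCl.PreservesCongruence (φ : SqCl R → SqCl S) : Prop :=
  ∀ a b : Fin 4 → Rˣ, DiagonalCongruent a b → ∃ a' b' : Fin 4 → Sˣ, DiagonalCongruent a' b' ∧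
    (∀ i, φ (cls (a i)) = cls (a' i)) ∧ ∀ i, φ (cls (b i)) = cls (b' i)

theorem mapDomainRingEquiv_gen (e : SqCl R ≃* SqCl S) {a : Rˣ} {b : Sˣ} (h : e (cls a) = cls b) :
    mapDomainRingEquiv ℤ e (gen a) = gen b := by
  simp [gen, MonoidAlgebra.of_apply, mapDomainRingEquiv_single, h]

theorem mapDomainRingEquiv_mem_span_gwRel {e : SqCl R ≃* SqCl S}
    (he : PreservesCongruence e) {x : GRing R} (hx : x ∈ gwRel R) :
    mapDomainRingEquiv ℤ e x ∈ Ideal.span (gwRel S) := by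
  obtain ⟨a, b, P, hP, hPab, rfl⟩ := hx
  obtain ⟨a', b', hab', ha, hb⟩ := he a b ⟨P, hP, hPab⟩
  simp only [map_sub, map_sum, mapDomainRingEquiv_gen e (ha _), mapDomainRingEquiv_gen e (hb _)]
  exact Ideal.subset_span (sub_mem_gwRel hab')

def GW.congr (e : SqCl R ≃* SqCl S) (he : PreservesCongruence e)
    (he' : PreservesCongruence e.symm) : GW R ≃+* GW S :=
  Ideal.quotientEquiv _ _ (mapDomainRingEquiv ℤ e) <| le_antisymm
    (Ideal.span_le.2 fun x hx => by
      rw [← (mapDomainRingEquiv ℤ e).apply_symm_apply x]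
      exact Ideal.mem_map_of_mem _ (mapDomainRingEquiv_mem_span_gwRel he' hx))
    (Ideal.map_le_iff_le_comap.2 <| Ideal.span_le.2 fun _ hx =>
      mapDomainRingEquiv_mem_span_gwRel he hx)

theorem GW.congr_gw {e : SqCl R ≃* SqCl S} (he : PreservesCongruence e)
    (he' : PreservesCongruence e.symm) {a : Rˣ} {b : Sˣ} (h : e (cls a) = cls b) :
    GW.congr e he he' (gw a) = gw b :=
  congrArg (Ideal.Quotient.mk _) (mapDomainRingEquiv_gen e h)

variable {f : R →+* S} {c : R}

theorem exists_gwEquiv_of_surjective (hf : Function.Surjective f) (hc : c * c = 0)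
    (hker : ∀ x, f x = 0 → 2 * c ∣ x) :
    ∃ ψ : GW R ≃+* GW S, ∀ a : Rˣ, ψ (gw a) = gw (Units.map (f : R →* S) a) := by
  let e := MulEquiv.ofBijective (SqCl.map f) (map_bijective hf hc hker)
  have he : PreservesCongruence e := fun a b h => ⟨_, _, h.map f, fun _ => rfl, fun _ => rfl⟩
  have he' : PreservesCongruence e.symm := by
    intro a b h
    choose a' ha' using fun i => exists_units_map_eq hf hc hker (a i)
    choose b' hb' using fun i => exists_units_map_eq hf hc hker (b i)
    obtain rfl : (fun i => Units.map (f : R →* S) (a' i)) = a := funext ha'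
    obtain rfl : (fun i => Units.map (f : R →* S) (b' i)) = b := funext hb'
    exact ⟨a', b', h.of_map hf hc hker, fun i => e.symm_apply_eq.2 rfl,
      fun i => e.symm_apply_eq.2 rfl⟩
  exact ⟨GW.congr e he he', fun a => GW.congr_gw he he' rfl⟩

end GrothendieckWitt

theorem ZMod.two_pow_pred_mul_self {n : ℕ} (hn : 3 ≤ n) :
    (2 ^ (n - 1) : ZMod (2 ^ (n + 1))) * 2 ^ (n - 1) = 0 := by
  have h : (2 : ZMod (2 ^ (n + 1))) ^ (n + 1) = 0 := by
    exact_mod_cast ZMod.natCast_self (2 ^ (n + 1))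
  rw [← pow_add, ← zero_mul ((2 : ZMod (2 ^ (n + 1))) ^ (n - 3)), ← h, ← pow_add]
  congr 1
  omega

theorem ZMod.natCast_dvd_of_castHom_eq_zero {m k : ℕ} [NeZero k] (h : m ∣ k) {x : ZMod k}
    (hx : ZMod.castHom h (ZMod m) x = 0) : (m : ZMod k) ∣ x := by
  rw [← ZMod.natCast_zmod_val x, map_natCast, ZMod.natCast_eq_zero_iff] at hx
  rw [← ZMod.natCast_zmod_val x]
  exact Nat.cast_dvd_cast hx

/-- For `n ≥ 3`, the ring homomorphism `GW(ℤ/2^{n+1}) → GW(ℤ/2ⁿ)` induced by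
the canonical projection (sending `[a]` to the class of the image of `a`) is a ring
isomorphism. -/
theorem gw_zmod_two_pow_iso (n : ℕ) (hn : 3 ≤ n) :
    ∃ ψ : GW (ZMod (2 ^ (n + 1))) →+* GW (ZMod (2 ^ n)),
      (∀ a : (ZMod (2 ^ (n + 1)))ˣ,
        ψ (gw a) =
          gw (Units.map ((ZMod.castHom (pow_dvd_pow 2 n.le_succ) (ZMod (2 ^ n))) :
            ZMod (2 ^ (n + 1)) →* ZMod (2 ^ n)) a)) ∧
      Function.Bijective ψ := by
  have hker (x : ZMod (2 ^ (n + 1)))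
      (hx : ZMod.castHom (pow_dvd_pow 2 n.le_succ) (ZMod (2 ^ n)) x = 0) :
      2 * 2 ^ (n - 1) ∣ x := by
    rw [← pow_succ', Nat.sub_add_cancel (by omega)]
    exact_mod_cast ZMod.natCast_dvd_of_castHom_eq_zero _ hx
  obtain ⟨ψ, hψ⟩ := exists_gwEquiv_of_surjective (ZMod.castHom_surjective _)
    (ZMod.two_pow_pred_mul_self hn) hker
  exact ⟨ψ, hψ, ψ.bijective⟩

end
end
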